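/- arXiv:1812.11896 — 10 statements merged into one kernel-verified Lean document; each statement's English description precedes it below -/
import Mathlib

section
/- In the knapsack setting with items indexed in nonincreasing density order, let G be the total value of the greedy prefix and let M = max_i v i be the largest single-item value. Then max(G, M) ≥ OPT/2; i.e., the greedy-based mechanism's allocation achieves at least 50% of the optimal welfare. -/
/-!
Let `k` be the greedy cutoff. If `k < n`, item `k` overflows the knapsack together with the
greedy prefix, so any feasible `S` outweighs the prefix by less than `w k`. Exchanging the items
of `S` outside the prefix (density at most `v k / w k`) against those of the prefix outside `S`
(density at least `v k / w k`) shows `∑ i ∈ S, v i ≤ G + v k ≤ G + M`; if `k = n` the prefix is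
everything and `∑ i ∈ S, v i ≤ G`. Either way `OPT ≤ G + M ≤ 2 max G M`.
-/

open Finset

theorem Finset.sum_le_sum_add_mul_of_density_threshold {ι : Type*} [DecidableEq ι]
    {v w : ι → ℝ} {P S : Finset ι} {c x : ℝ} (hc : 0 ≤ c)
    (hSP : ∀ i ∈ S \ P, v i ≤ c * w i) (hPS : ∀ i ∈ P \ S, c * w i ≤ v i)
    (hw : ∑ i ∈ S, w i ≤ ∑ i ∈ P, w i + x) :
    ∑ i ∈ S, v i ≤ ∑ i ∈ P, v i + c * x := by
  have hwsdiff : ∑ i ∈ S \ P, w i ≤ ∑ i ∈ P \ S, w i + x := by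
    have := sum_sdiff_sub_sum_sdiff (s₁ := P) (s₂ := S) (f := w)
    linarith
  have hvS := sum_sdiff_sub_sum_sdiff (s₁ := P) (s₂ := S) (f := v)
  calc ∑ i ∈ S, v i
      = ∑ i ∈ P, v i + (∑ i ∈ S \ P, v i - ∑ i ∈ P \ S, v i) := by linarith
    _ ≤ ∑ i ∈ P, v i + (c * ∑ i ∈ S \ P, w i - c * ∑ i ∈ P \ S, w i) := by
        rw [mul_sum, mul_sum]
        gcongr with i hi i hi
        exacts [hSP i hi, hPS i hi]
    _ ≤ ∑ i ∈ P, v i + c * x := by nlinarith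

theorem Fin.sum_filter_val_lt_succ {M : Type*} [AddCommMonoid M] {n k : ℕ} (hk : k < n)
    (f : Fin n → M) :
    ∑ i ∈ univ.filter (fun i : Fin n => (i : ℕ) < k + 1), f i =
      ∑ i ∈ univ.filter (fun i : Fin n => (i : ℕ) < k), f i + f ⟨k, hk⟩ := by
  have hinsert : univ.filter (fun i : Fin n => (i : ℕ) < k + 1) =
      insert ⟨k, hk⟩ (univ.filter (fun i : Fin n => (i : ℕ) < k)) := by
    ext i
    simp only [mem_filter, mem_univ, true_and, mem_insert, Fin.ext_iff]
    omega
  rw [hinsert, sum_insert (by simp), add_comm]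

theorem sum_le_sum_filter_val_lt_add_of_density_antitone {n : ℕ} {v w : Fin n → ℝ} {W : ℝ}
    (hv : ∀ i, 0 ≤ v i) (hw0 : ∀ i, 0 < w i)
    (hdens : ∀ i j : Fin n, i ≤ j → v j / w j ≤ v i / w i)
    {k : ℕ} (hk : k < n)
    (hover : W < ∑ i ∈ univ.filter (fun i : Fin n => (i : ℕ) < k + 1), w i)
    {S : Finset (Fin n)} (hS : ∑ i ∈ S, w i ≤ W) :
    ∑ i ∈ S, v i ≤ ∑ i ∈ univ.filter (fun i : Fin n => (i : ℕ) < k), v i + v ⟨k, hk⟩ := by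
  set j : Fin n := ⟨k, hk⟩
  have hcw : v j / w j * w j = v j := div_mul_cancel₀ _ (hw0 j).ne'
  rw [Fin.sum_filter_val_lt_succ hk] at hover
  rw [← hcw]
  refine sum_le_sum_add_mul_of_density_threshold (div_nonneg (hv j) (hw0 j).le)
    (fun i hi => ?_) (fun i hi => ?_) (by linarith)
  · have hji : j ≤ i := Fin.le_def.mpr (by simpa [j] using (mem_sdiff.mp hi).2)
    exact (div_le_iff₀ (hw0 i)).mp (hdens j i hji)
  · have hij : i ≤ j :=
      Fin.le_def.mpr (by simpa [j] using (mem_filter.mp (mem_sdiff.mp hi).1).2.le)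
    exact (le_div_iff₀ (hw0 i)).mp (hdens i j hij)

theorem greedy_knapsack_half_optimal_general
    (n : ℕ) (hn : 1 ≤ n) (v w : Fin n → ℝ) (W : ℝ)
    (hv : ∀ i, 0 ≤ v i) (hw0 : ∀ i, 0 < w i)
    (hdens : ∀ i j : Fin n, i ≤ j → v j / w j ≤ v i / w i)
    (k : ℕ) (hkn : k ≤ n)
    (hkmax : ∀ k', k' ≤ n →
      ∑ i ∈ Finset.univ.filter (fun i : Fin n => (i : ℕ) < k'), w i ≤ W → k' ≤ k)
    (S : Finset (Fin n)) (hS : ∑ i ∈ S, w i ≤ W) :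
    (∑ i ∈ S, v i) / 2 ≤
      max (∑ i ∈ Finset.univ.filter (fun i : Fin n => (i : ℕ) < k), v i)
        (Finset.univ.sup' ⟨⟨0, hn⟩, Finset.mem_univ _⟩ v) := by
  set G := ∑ i ∈ univ.filter (fun i : Fin n => (i : ℕ) < k), v i
  set M := univ.sup' ⟨⟨0, hn⟩, mem_univ _⟩ v
  have hM : ∀ i, v i ≤ M := fun i => le_sup' v (mem_univ i)
  have hbound : ∑ i ∈ S, v i ≤ G + M := by
    rcases hkn.lt_or_eq with hk | rfl
    · have hover : W < ∑ i ∈ univ.filter (fun i : Fin n => (i : ℕ) < k + 1), w i := by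
        by_contra! h
        exact absurd (hkmax (k + 1) hk h) (by omega)
      linarith [sum_le_sum_filter_val_lt_add_of_density_antitone hv hw0 hdens hk hover hS,
        hM ⟨k, hk⟩]
    · have hG : G = ∑ i, v i := by simp [G]
      have hSG : ∑ i ∈ S, v i ≤ G :=
        hG ▸ sum_le_sum_of_subset_of_nonneg (subset_univ S) fun i _ _ => hv i
      linarith [hv ⟨0, hn⟩, hM ⟨0, hn⟩]
  linarith [le_max_left G M, le_max_right G M]

/-- **Greedy-based knapsack mechanism achieves 50% of optimal welfare.**
In the knapsack setting with items indexed in nonincreasing density order, let `G`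
be the total value of the greedy prefix (the largest prefix fitting in the knapsack)
and `M = max_i v i` the largest single-item value.  Then `max G M ≥ OPT/2`, i.e.,
for every feasible subset `S`, `max G M ≥ (∑ i in S, v i)/2`. -/
theorem greedy_knapsack_half_optimal
    (n : ℕ) (hn : 1 ≤ n) (v w : Fin n → ℝ) (W : ℝ) (hW : 0 < W)
    (hv : ∀ i, 0 ≤ v i) (hw0 : ∀ i, 0 < w i) (hwW : ∀ i, w i ≤ W)
    (hdens : ∀ i j : Fin n, i ≤ j → v j / w j ≤ v i / w i)
    (k : ℕ) (hkn : k ≤ n)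
    (hkfeas : ∑ i ∈ Finset.univ.filter (fun i : Fin n => (i : ℕ) < k), w i ≤ W)
    (hkmax : ∀ k', k' ≤ n →
      ∑ i ∈ Finset.univ.filter (fun i : Fin n => (i : ℕ) < k'), w i ≤ W → k' ≤ k)
    (S : Finset (Fin n)) (hS : ∑ i ∈ S, w i ≤ W) :
    (∑ i ∈ S, v i) / 2 ≤
      max (∑ i ∈ Finset.univ.filter (fun i : Fin n => (i : ℕ) < k), v i)
        (Finset.univ.sup' ⟨⟨0, hn⟩, Finset.mem_univ _⟩ v) :=
  greedy_knapsack_half_optimal_general n hn v w W hv hw0 hdens k hkn hkmax S hS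
end

section
/- In the knapsack setting with items indexed in nonincreasing density order, if k ≤ n is such that the prefix {0,…,k−1} has total size ∑_{i<k} w i ≥ W, then its total value satisfies ∑_{i<k} v i ≥ OPT. (A greedy prefix whose size reaches the capacity is at least as valuable as any feasible subset.) -/
/-! The last item `j` of the prefix has density `ρ = v j / w j`, which bounds the density of every
item outside the prefix from above and of every item inside it from below. Exchanging the items of
`S` outside the prefix for the prefix items missing from `S` therefore costs at most `ρ` per unit
of size on one side and gains at least `ρ` per unit on the other, while the prefix is at least as
large as `S`. -/

open Finset

theorem Finset.sum_le_sum_of_exchange_at_rate {ι : Type*} [DecidableEq ι] {S P : Finset ι}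
    {v w : ι → ℝ} {ρ : ℝ} (hρ : 0 ≤ ρ) (hout : ∀ i ∈ S \ P, v i ≤ ρ * w i)
    (hin : ∀ i ∈ P \ S, ρ * w i ≤ v i) (hw : ∑ i ∈ S, w i ≤ ∑ i ∈ P, w i) :
    ∑ i ∈ S, v i ≤ ∑ i ∈ P, v i := by
  have hw_sdiff : ∑ i ∈ S \ P, w i ≤ ∑ i ∈ P \ S, w i := by
    rw [← sum_inter_add_sum_sdiff S P w, ← sum_inter_add_sum_sdiff P S w, inter_comm] at hw
    linarith
  have hv_sdiff : ∑ i ∈ S \ P, v i ≤ ∑ i ∈ P \ S, v i :=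
    calc ∑ i ∈ S \ P, v i ≤ ∑ i ∈ S \ P, ρ * w i := sum_le_sum hout
      _ = ρ * ∑ i ∈ S \ P, w i := (mul_sum _ _ _).symm
      _ ≤ ρ * ∑ i ∈ P \ S, w i := mul_le_mul_of_nonneg_left hw_sdiff hρ
      _ = ∑ i ∈ P \ S, ρ * w i := mul_sum _ _ _
      _ ≤ ∑ i ∈ P \ S, v i := sum_le_sum hin
  rw [← sum_inter_add_sum_sdiff S P v, ← sum_inter_add_sum_sdiff P S v, inter_comm]
  linarith

theorem greedy_prefix_filling_knapsack_is_optimal_general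
    (n : ℕ) (v w : Fin n → ℝ) (W : ℝ) (hW : 0 < W)
    (hv : ∀ i, 0 ≤ v i) (hw0 : ∀ i, 0 < w i)
    (hdens : ∀ i j : Fin n, i ≤ j → v j / w j ≤ v i / w i)
    (k : ℕ) (hkn : k ≤ n)
    (hkfull : W ≤ ∑ i ∈ Finset.univ.filter (fun i : Fin n => (i : ℕ) < k), w i)
    (S : Finset (Fin n)) (hS : ∑ i ∈ S, w i ≤ W) :
    ∑ i ∈ S, v i ≤ ∑ i ∈ Finset.univ.filter (fun i : Fin n => (i : ℕ) < k), v i := by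
  have hk : k ≠ 0 := by
    rintro rfl
    simp at hkfull
    linarith
  let j : Fin n := ⟨k - 1, by omega⟩
  refine sum_le_sum_of_exchange_at_rate (div_nonneg (hv j) (hw0 j).le) ?_ ?_ (hS.trans hkfull)
  · intro i hi
    simp only [mem_sdiff, mem_filter, mem_univ, true_and, not_lt] at hi
    exact (div_le_iff₀ (hw0 i)).mp (hdens j i (Fin.le_def.mpr (by simp only [j]; omega)))
  · intro i hi
    simp only [mem_sdiff, mem_filter, mem_univ, true_and] at hi
    exact (le_div_iff₀ (hw0 i)).mp (hdens i j (Fin.le_def.mpr (by simp only [j]; omega)))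

/-- **A greedy prefix that fills the knapsack is optimal.**
In the knapsack setting with items indexed in nonincreasing density order, if the
prefix `{0,…,k−1}` has total size at least `W`, then its total value is at least
`OPT`: it is at least the value of every feasible subset `S`. -/
theorem greedy_prefix_filling_knapsack_is_optimal
    (n : ℕ) (hn : 1 ≤ n) (v w : Fin n → ℝ) (W : ℝ) (hW : 0 < W)
    (hv : ∀ i, 0 ≤ v i) (hw0 : ∀ i, 0 < w i) (hwW : ∀ i, w i ≤ W)
    (hdens : ∀ i j : Fin n, i ≤ j → v j / w j ≤ v i / w i)
    (k : ℕ) (hkn : k ≤ n)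
    (hkfull : W ≤ ∑ i ∈ Finset.univ.filter (fun i : Fin n => (i : ℕ) < k), w i)
    (S : Finset (Fin n)) (hS : ∑ i ∈ S, w i ≤ W) :
    ∑ i ∈ S, v i ≤ ∑ i ∈ Finset.univ.filter (fun i : Fin n => (i : ℕ) < k), v i :=
  greedy_prefix_filling_knapsack_is_optimal_general n v w W hW hv hw0 hdens k hkn hkfull S hS
end

section
/- In the knapsack setting with items indexed in nonincreasing density order, for any k ≤ n, if the prefix {0,…,k−1} has total size T = ∑_{i<k} w i with T ≤ W, then its total value satisfies ∑_{i<k} v i ≥ (T/W)·OPT. (A greedy prefix captures value at least proportional to the fraction of capacity it fills.) -/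
/-!
Let `ρ` be the density of the last item of the prefix `P`. Every item of `P` has value at least
`ρ` times its size and every other item at most that, so the excess `f i = v i - ρ * w i` is
nonnegative on `P` and nonpositive off it. Hence `v(S) = ρ w(S) + f(S) ≤ ρ W + f(P)`, while
`v(P) = ρ T + f(P)`; multiplying by `T ≤ W` gives `T v(S) ≤ W v(P)`.
-/

open Finset

namespace Finset

variable {ι : Type*} [DecidableEq ι]

theorem sum_le_sum_of_nonneg_of_nonpos_compl {f : ι → ℝ} {P S : Finset ι}
    (hP : ∀ i ∈ P, 0 ≤ f i) (hPc : ∀ i ∉ P, f i ≤ 0) :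
    ∑ i ∈ S, f i ≤ ∑ i ∈ P, f i :=
  calc ∑ i ∈ S, f i = ∑ i ∈ S ∩ P, f i + ∑ i ∈ S \ P, f i :=
        (sum_inter_add_sum_sdiff S P f).symm
    _ ≤ ∑ i ∈ S ∩ P, f i + 0 := by
        gcongr
        exact sum_nonpos fun i hi => hPc i (mem_sdiff.mp hi).2
    _ ≤ ∑ i ∈ P, f i := by
        rw [add_zero]
        exact sum_le_sum_of_subset_of_nonneg inter_subset_right fun i hi _ => hP i hi

theorem sum_mul_sum_le_of_density_threshold {v w : ι → ℝ} {ρ W : ℝ} {P S : Finset ι}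
    (hρ : 0 ≤ ρ) (hP : ∀ i ∈ P, ρ * w i ≤ v i) (hPc : ∀ i ∉ P, v i ≤ ρ * w i)
    (hP0 : 0 ≤ ∑ i ∈ P, w i) (hPW : ∑ i ∈ P, w i ≤ W) (hSW : ∑ i ∈ S, w i ≤ W) :
    (∑ i ∈ P, w i) * ∑ i ∈ S, v i ≤ W * ∑ i ∈ P, v i := by
  set f : ι → ℝ := fun i => v i - ρ * w i
  have hv (s : Finset ι) : ∑ i ∈ s, v i = ρ * ∑ i ∈ s, w i + ∑ i ∈ s, f i := by
    simp only [f, sum_sub_distrib, mul_sum, add_sub_cancel]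
  have hfP : 0 ≤ ∑ i ∈ P, f i := sum_nonneg fun i hi => sub_nonneg.mpr (hP i hi)
  have hfS : ∑ i ∈ S, f i ≤ ∑ i ∈ P, f i :=
    sum_le_sum_of_nonneg_of_nonpos_compl (fun i hi => sub_nonneg.mpr (hP i hi))
      fun i hi => sub_nonpos.mpr (hPc i hi)
  have hS : ∑ i ∈ S, v i ≤ ρ * W + ∑ i ∈ P, f i := by
    rw [hv S]
    gcongr
  calc (∑ i ∈ P, w i) * ∑ i ∈ S, v i
      ≤ (∑ i ∈ P, w i) * (ρ * W + ∑ i ∈ P, f i) := by gcongr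
    _ ≤ W * (ρ * ∑ i ∈ P, w i + ∑ i ∈ P, f i) := by nlinarith
    _ = W * ∑ i ∈ P, v i := by rw [hv P]

end Finset

theorem greedy_prefix_proportional_value_general
    (n : ℕ) (hn : 1 ≤ n) (v w : Fin n → ℝ) (W : ℝ) (hW : 0 < W)
    (hv : ∀ i, 0 ≤ v i) (hw0 : ∀ i, 0 < w i)
    (hdens : ∀ i j : Fin n, i ≤ j → v j / w j ≤ v i / w i)
    (k : ℕ) (hkn : k ≤ n) (T : ℝ)
    (hT : T = ∑ i ∈ Finset.univ.filter (fun i : Fin n => (i : ℕ) < k), w i)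
    (hTW : T ≤ W)
    (S : Finset (Fin n)) (hS : ∑ i ∈ S, w i ≤ W) :
    (T / W) * ∑ i ∈ S, v i ≤
      ∑ i ∈ Finset.univ.filter (fun i : Fin n => (i : ℕ) < k), v i := by
  -- For `k = 0` the truncated `k - 1 = 0` still gives a valid threshold item.
  set j : Fin n := ⟨k - 1, by omega⟩
  have hP (i : Fin n) (hi : i ∈ univ.filter fun i : Fin n => (i : ℕ) < k) :
      v j / w j * w i ≤ v i :=
    (le_div_iff₀ (hw0 i)).mp <| hdens i j <| Fin.le_def.mpr (by simp at hi; simp [j]; omega)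
  have hPc (i : Fin n) (hi : i ∉ univ.filter fun i : Fin n => (i : ℕ) < k) :
      v i ≤ v j / w j * w i :=
    (div_le_iff₀ (hw0 i)).mp <| hdens j i <| Fin.le_def.mpr (by simp at hi; simp [j]; omega)
  subst hT
  rw [div_mul_eq_mul_div, div_le_iff₀ hW, mul_comm _ W]
  exact sum_mul_sum_le_of_density_threshold (div_nonneg (hv j) (hw0 j).le) hP hPc
    (sum_nonneg fun i _ => (hw0 i).le) hTW hS

/-- **A greedy prefix captures value proportional to the capacity it fills.**
In the knapsack setting with items indexed in nonincreasing density order, if the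
prefix `{0,…,k−1}` has total size `T ≤ W`, then its total value is at least
`(T/W)·OPT`: at least `(T/W)` times the value of every feasible subset `S`. -/
theorem greedy_prefix_proportional_value
    (n : ℕ) (hn : 1 ≤ n) (v w : Fin n → ℝ) (W : ℝ) (hW : 0 < W)
    (hv : ∀ i, 0 ≤ v i) (hw0 : ∀ i, 0 < w i) (hwW : ∀ i, w i ≤ W)
    (hdens : ∀ i j : Fin n, i ≤ j → v j / w j ≤ v i / w i)
    (k : ℕ) (hkn : k ≤ n) (T : ℝ)
    (hT : T = ∑ i ∈ Finset.univ.filter (fun i : Fin n => (i : ℕ) < k), w i)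
    (hTW : T ≤ W)
    (S : Finset (Fin n)) (hS : ∑ i ∈ S, w i ≤ W) :
    (T / W) * ∑ i ∈ S, v i ≤
      ∑ i ∈ Finset.univ.filter (fun i : Fin n => (i : ℕ) < k), v i :=
  greedy_prefix_proportional_value_general n hn v w W hW hv hw0 hdens k hkn T hT hTW S hS
end

section
/- In the knapsack setting with items indexed in nonincreasing density order, suppose additionally that every item is small: w i ≤ α·W for all i, where 0 < α < 1. Then the total value of the greedy prefix is at least (1 − α)·OPT. -/
/-- **Greedy with small items.**
In the knapsack setting with items indexed in nonincreasing density order, if every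
item is small (`w i ≤ α·W` for all `i`, where `0 < α < 1`), then the total value of
the greedy prefix (the largest prefix fitting in the knapsack) is at least
`(1 − α)·OPT`: at least `(1 − α)` times the value of every feasible subset `S`. -/
theorem greedy_prefix_small_items
    (n : ℕ) (hn : 1 ≤ n) (v w : Fin n → ℝ) (W : ℝ) (hW : 0 < W)
    (hv : ∀ i, 0 ≤ v i) (hw0 : ∀ i, 0 < w i) (hwW : ∀ i, w i ≤ W)
    (hdens : ∀ i j : Fin n, i ≤ j → v j / w j ≤ v i / w i)
    (α : ℝ) (hα0 : 0 < α) (hα1 : α < 1) (hsmall : ∀ i, w i ≤ α * W)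
    (k : ℕ) (hkn : k ≤ n)
    (hkfeas : ∑ i ∈ Finset.univ.filter (fun i : Fin n => (i : ℕ) < k), w i ≤ W)
    (hkmax : ∀ k', k' ≤ n →
      ∑ i ∈ Finset.univ.filter (fun i : Fin n => (i : ℕ) < k'), w i ≤ W → k' ≤ k)
    (S : Finset (Fin n)) (hS : ∑ i ∈ S, w i ≤ W) :
    (1 - α) * ∑ i ∈ S, v i ≤
      ∑ i ∈ Finset.univ.filter (fun i : Fin n => (i : ℕ) < k), v i := by
  set P := Finset.univ.filter (fun i : Fin n => (i : ℕ) < k) with hP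
  have hSv0 : (0:ℝ) ≤ ∑ i ∈ S, v i := Finset.sum_nonneg fun i _ => hv i
  rcases eq_or_lt_of_le hkn with hkeq | hklt
  · -- k = n : P = univ
    have hPuniv : P = Finset.univ := by
      ext i
      have := i.isLt
      simp only [hP, Finset.mem_filter, Finset.mem_univ, true_and, iff_true]
      omega
    have hsub : ∑ i ∈ S, v i ≤ ∑ i ∈ P, v i := by
      rw [hPuniv]
      exact Finset.sum_le_sum_of_subset_of_nonneg (Finset.subset_univ S)
        (fun i _ _ => hv i)
    nlinarith
  · -- k < n
    set K : Fin n := ⟨k, hklt⟩ with hK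
    set ρ := v K / w K with hρ
    have hρ0 : 0 ≤ ρ := div_nonneg (hv K) (hw0 K).le
    -- prefix of length k+1 does not fit
    have hQ : Finset.univ.filter (fun i : Fin n => (i : ℕ) < k + 1) = insert K P := by
      ext i
      simp only [Finset.mem_filter, Finset.mem_univ, true_and, Finset.mem_insert, hP]
      constructor
      · intro h
        rcases Nat.lt_succ_iff_lt_or_eq.mp h with h' | h'
        · exact Or.inr (by simp [h'])
        · exact Or.inl (Fin.ext h')
      · rintro (rfl | h)
        · exact Nat.lt_succ_self k
        · omega
    have hKP : K ∉ P := by simp [hP, hK]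
    have hbig : W < ∑ i ∈ P, w i + w K := by
      by_contra hcon
      push_neg at hcon
      have := hkmax (k+1) hklt (by rw [hQ, Finset.sum_insert hKP]; linarith)
      omega
    have hPw : (1 - α) * W ≤ ∑ i ∈ P, w i := by
      have := hsmall K; nlinarith
    -- density bounds
    have hin : ∀ i ∈ P, ρ * w i ≤ v i := by
      intro i hi
      simp only [hP, Finset.mem_filter] at hi
      have hle : i ≤ K := le_of_lt (by exact hi.2)
      have := hdens i K hle
      exact (le_div_iff₀ (hw0 i)).mp this
    have hout : ∀ i ∈ S \ P, v i ≤ ρ * w i := by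
      intro i hi
      simp only [hP, Finset.mem_sdiff, Finset.mem_filter, Finset.mem_univ, true_and] at hi
      have hle : K ≤ i := by
        have : k ≤ (i : ℕ) := by omega
        exact this
      have := hdens K i hle
      exact (div_le_iff₀ (hw0 i)).mp this
    set A := ∑ i ∈ S ∩ P, v i with hA
    set B := ∑ i ∈ S ∩ P, w i with hB
    have h2 : ρ * B ≤ A := by
      rw [hA, hB, Finset.mul_sum]
      exact Finset.sum_le_sum fun i hi => hin i (Finset.mem_of_mem_inter_right hi)
    have h3 : ρ * ∑ i ∈ P \ S, w i ≤ ∑ i ∈ P \ S, v i := by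
      rw [Finset.mul_sum]
      exact Finset.sum_le_sum fun i hi => hin i (Finset.mem_sdiff.mp hi).1
    have h1 : ∑ i ∈ S \ P, v i ≤ ρ * ∑ i ∈ S \ P, w i := by
      rw [Finset.mul_sum]
      exact Finset.sum_le_sum hout
    have hSsplit : ∑ i ∈ S, w i = B + ∑ i ∈ S \ P, w i := by
      rw [hB]; exact (Finset.sum_inter_add_sum_sdiff S P w).symm
    have hSvsplit : ∑ i ∈ S, v i = A + ∑ i ∈ S \ P, v i := by
      rw [hA]; exact (Finset.sum_inter_add_sum_sdiff S P v).symm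
    have hPsplit : ∑ i ∈ P, w i = ∑ i ∈ P ∩ S, w i + ∑ i ∈ P \ S, w i :=
      (Finset.sum_inter_add_sum_sdiff P S w).symm
    have hPvsplit : ∑ i ∈ P, v i = ∑ i ∈ P ∩ S, v i + ∑ i ∈ P \ S, v i :=
      (Finset.sum_inter_add_sum_sdiff P S v).symm
    have hic : P ∩ S = S ∩ P := Finset.inter_comm P S
    rw [hic] at hPsplit hPvsplit
    have hSub : ∑ i ∈ S, v i ≤ A + ρ * (W - B) := by
      have hw4 : ∑ i ∈ S \ P, w i ≤ W - B := by linarith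
      have := mul_le_mul_of_nonneg_left hw4 hρ0
      linarith
    have hPlb : A + ρ * ((1 - α) * W - B) ≤ ∑ i ∈ P, v i := by
      have hw5 : (1 - α) * W - B ≤ ∑ i ∈ P \ S, w i := by linarith
      have := mul_le_mul_of_nonneg_left hw5 hρ0
      linarith
    nlinarith [mul_nonneg hα0.le (sub_nonneg.mpr h2)]
end

section
/- Monotonicity of the greedy-based knapsack allocation rule: fix weights w (0 < w i ≤ W) and the bids of all players other than i. If player i is in the set chosen by the greedy-based rule when it bids b_i ≥ 0, then player i is also in the chosen set when it bids any b'_i > b_i. -/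
open Classical in
/-- The greedy solution for bids `b`, sizes `w`, and capacity `W`: players are ordered
by nonincreasing bang-per-buck `b i / w i`, ties broken by least index, and the greedy
solution is the longest prefix of this order with total size at most `W`.  Since sizes
are positive, player `i` belongs to this prefix iff the total size of the players
weakly preceding `i` in the order is at most `W`. -/
noncomputable def greedySolution {n : ℕ} (b w : Fin n → ℝ) (W : ℝ) : Finset (Fin n) :=
  Finset.univ.filter (fun i =>
    ∑ j ∈ Finset.univ.filter
        (fun j => b i / w i < b j / w j ∨ (b j / w j = b i / w i ∧ j ≤ i)), w j ≤ W)

/-- The highest bidder, ties broken by least index. -/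
noncomputable def topBidder {n : ℕ} [NeZero n] (b : Fin n → ℝ) : Fin n :=
  open Classical in
  (Finset.univ.filter (fun i => ∀ j, b j ≤ b i)).min' (by
    obtain ⟨i, -, hi⟩ := Finset.exists_max_image Finset.univ b Finset.univ_nonempty
    exact ⟨i, by simpa using fun j => hi j (Finset.mem_univ j)⟩)

open Classical in
/-- The set chosen by the greedy-based knapsack mechanism: either the greedy solution
or the singleton consisting of a highest bidder (least index among them), whichever
has the larger sum of bids (the greedy solution in case of a tie). -/
noncomputable def greedyChosenSet {n : ℕ} [NeZero n] (b w : Fin n → ℝ) (W : ℝ) :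
    Finset (Fin n) :=
  if b (topBidder b) ≤ ∑ i ∈ greedySolution b w W, b i then greedySolution b w W
  else {topBidder b}

open Classical in
/-- Auxiliary: the set of players weakly preceding `k` in the greedy order. -/
noncomputable def gPreds {n : ℕ} (b w : Fin n → ℝ) (k : Fin n) : Finset (Fin n) :=
  Finset.univ.filter (fun j => b k / w k < b j / w j ∨ (b j / w j = b k / w k ∧ j ≤ k))

lemma mem_gPreds {n : ℕ} (b w : Fin n → ℝ) (k j : Fin n) :
    j ∈ gPreds b w k ↔ (b k / w k < b j / w j ∨ (b j / w j = b k / w k ∧ j ≤ k)) := by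
  simp [gPreds]

lemma mem_greedySolution_iff {n : ℕ} (b w : Fin n → ℝ) (W : ℝ) (k : Fin n) :
    k ∈ greedySolution b w W ↔ ∑ j ∈ gPreds b w k, w j ≤ W := by
  simp [greedySolution, gPreds]

lemma topBidder_le {n : ℕ} [NeZero n] (b : Fin n → ℝ) (j : Fin n) :
    b j ≤ b (topBidder b) := by
  classical
  have h : topBidder b ∈ Finset.univ.filter (fun i => ∀ j, b j ≤ b i) :=
    Finset.min'_mem _ _
  exact (Finset.mem_filter.mp h).2 j

open Classical in
lemma topBidder_eq {n : ℕ} [NeZero n] (b : Fin n → ℝ) (i : Fin n)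
    (h : ∀ j, j ≠ i → b j < b i) : topBidder b = i := by
  have hset : (Finset.univ.filter (fun k => ∀ j, b j ≤ b k)) = {i} := by
    ext k
    simp only [Finset.mem_filter, Finset.mem_univ, true_and, Finset.mem_singleton]
    constructor
    · intro hk
      by_contra hne
      exact absurd (hk i) (not_le.mpr (h k hne))
    · rintro rfl j
      rcases eq_or_ne j k with rfl | hj
      · exact le_refl _
      · exact (h j hj).le
  have hmem : topBidder b ∈ (Finset.univ.filter (fun k => ∀ j, b j ≤ b k)) :=
    Finset.min'_mem _ _
  rw [hset] at hmem
  simpa using hmem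


/-- **Monotonicity of the greedy-based knapsack allocation rule.**
Fix sizes `w` with `0 < w i ≤ W` and the bids of all players other than `i`.  If
player `i` is chosen by the greedy-based rule when bidding `b i ≥ 0`, then it is also
chosen when raising its bid to any `b' i > b i`. -/
theorem greedyChosenSet_monotone
    (n : ℕ) [NeZero n] (w : Fin n → ℝ) (W : ℝ) (hW : 0 < W)
    (hw : ∀ j, 0 < w j ∧ w j ≤ W)
    (b b' : Fin n → ℝ) (i : Fin n)
    (hb : ∀ j, 0 ≤ b j) (hfix : ∀ j, j ≠ i → b' j = b j) (hup : b i < b' i)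
    (hmem : i ∈ greedyChosenSet b w W) :
    i ∈ greedyChosenSet b' w W := by
  classical
  have hwpos : ∀ j, (0:ℝ) < w j := fun j => (hw j).1
  have hwnn : ∀ j, (0:ℝ) ≤ w j := fun j => (hwpos j).le
  have hble : ∀ j, b j ≤ b' j := by
    intro j
    rcases eq_or_ne j i with rfl | hj
    · exact hup.le
    · rw [hfix j hj]
  have hb' : ∀ j, 0 ≤ b' j := fun j => (hb j).trans (hble j)
  have hrho : b i / w i < b' i / w i := div_lt_div_of_pos_right hup (hwpos i)
  -- raising i's bid shrinks i's predecessor set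
  have hBsub : gPreds b' w i ⊆ gPreds b w i := by
    intro k hk
    rw [mem_gPreds] at hk ⊢
    rcases eq_or_ne k i with rfl | hki
    · exact Or.inr ⟨rfl, le_refl _⟩
    · rw [hfix k hki] at hk
      left
      rcases hk with h1 | ⟨h1, _⟩
      · exact lt_trans hrho h1
      · exact h1 ▸ hrho
  have lemB : i ∈ greedySolution b w W → i ∈ greedySolution b' w W := by
    intro h
    rw [mem_greedySolution_iff] at h ⊢
    exact le_trans
      (Finset.sum_le_sum_of_subset_of_nonneg hBsub (fun j _ _ => hwnn j)) h
  -- players other than i in the new greedy solution were in the old one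
  have lemD : ∀ j, j ≠ i → j ∈ greedySolution b' w W → j ∈ greedySolution b w W := by
    intro j hj hjm
    rw [mem_greedySolution_iff] at hjm ⊢
    refine le_trans
      (Finset.sum_le_sum_of_subset_of_nonneg ?_ (fun k _ _ => hwnn k)) hjm
    intro k hk
    rw [mem_gPreds] at hk ⊢
    rw [hfix j hj]
    rcases eq_or_ne k i with rfl | hki
    · left
      rcases hk with h1 | ⟨h1, _⟩
      · exact lt_trans h1 hrho
      · exact h1 ▸ hrho
    · rw [hfix k hki]
      exact hk
  -- if i was in the old greedy solution, the greedy solution only grows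
  have lemC : i ∈ greedySolution b w W →
      ∀ j ∈ greedySolution b w W, j ∈ greedySolution b' w W := by
    intro hi j hjm
    rcases eq_or_ne j i with rfl | hj
    · exact lemB hi
    by_cases hip : i ∈ gPreds b w j
    · -- i already preceded j, so j's predecessor set is unchanged or shrinks
      rw [mem_greedySolution_iff] at hjm ⊢
      refine le_trans
        (Finset.sum_le_sum_of_subset_of_nonneg ?_ (fun k _ _ => hwnn k)) hjm
      intro k hk
      rw [mem_gPreds] at hk ⊢
      rw [mem_gPreds] at hip
      rw [hfix j hj] at hk
      rcases eq_or_ne k i with rfl | hki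
      · exact hip
      · rw [hfix k hki] at hk
        exact hk
    · -- i jumps ahead of j; j's new predecessors fit within i's old predecessors
      rw [mem_greedySolution_iff] at hi ⊢
      have hsub1 : gPreds b' w j ⊆ insert i (gPreds b w j) := by
        intro k hk
        rcases eq_or_ne k i with rfl | hki
        · exact Finset.mem_insert_self _ _
        · refine Finset.mem_insert_of_mem ?_
          rw [mem_gPreds] at hk ⊢
          rw [hfix j hj, hfix k hki] at hk
          exact hk
      have hip' : ¬ (b j / w j < b i / w i ∨ (b i / w i = b j / w j ∧ i ≤ j)) := by
        rw [mem_gPreds] at hip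
        exact hip
      push_neg at hip'
      obtain ⟨hle, himp⟩ := hip'
      have hsub2 : insert i (gPreds b w j) ⊆ gPreds b w i := by
        intro k hk
        rcases Finset.mem_insert.mp hk with rfl | hk
        · rw [mem_gPreds]
          exact Or.inr ⟨rfl, le_refl _⟩
        · rw [mem_gPreds] at hk ⊢
          rcases hk with h1 | ⟨h1, h2⟩
          · exact Or.inl (lt_of_le_of_lt hle h1)
          · rcases lt_or_eq_of_le hle with h3 | h3
            · exact Or.inl (h1 ▸ h3)
            · exact Or.inr ⟨h1.trans h3.symm, h2.trans (himp h3).le⟩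
      calc ∑ k ∈ gPreds b' w j, w k
          ≤ ∑ k ∈ insert i (gPreds b w j), w k :=
            Finset.sum_le_sum_of_subset_of_nonneg hsub1 (fun k _ _ => hwnn k)
        _ ≤ ∑ k ∈ gPreds b w i, w k :=
            Finset.sum_le_sum_of_subset_of_nonneg hsub2 (fun k _ _ => hwnn k)
        _ ≤ W := hi
  -- main case analysis
  unfold greedyChosenSet at hmem ⊢
  split_ifs at hmem ⊢ with h1 h2 h2
  · -- greedy chosen both times
    exact lemB hmem
  · -- top bidder chosen before, greedy chosen after: i must be in the new greedy set
    rw [Finset.mem_singleton] at hmem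
    by_contra hni
    have hsum : ∑ k ∈ greedySolution b' w W, b' k = ∑ k ∈ greedySolution b' w W, b k := by
      refine Finset.sum_congr rfl (fun k hk => ?_)
      exact hfix k (fun h => hni (h ▸ hk))
    have hsub : greedySolution b' w W ⊆ greedySolution b w W := by
      intro k hk
      exact lemD k (fun h => hni (h ▸ hk)) hk
    have : b' (topBidder b') < b' (topBidder b') := by
      calc b' (topBidder b')
          ≤ ∑ k ∈ greedySolution b' w W, b' k := h1
        _ = ∑ k ∈ greedySolution b' w W, b k := hsum
        _ ≤ ∑ k ∈ greedySolution b w W, b k :=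
            Finset.sum_le_sum_of_subset_of_nonneg hsub (fun k _ _ => hb k)
        _ < b (topBidder b) := not_le.mp h2
        _ = b i := by rw [hmem]
        _ < b' i := hup
        _ ≤ b' (topBidder b') := topBidder_le b' i
    exact absurd this (lt_irrefl _)
  · -- greedy chosen before, top bidder after: the top bidder must be i
    rw [Finset.mem_singleton]
    by_contra hne
    have hne' : topBidder b' ≠ i := fun h => hne h.symm
    have hchain : b' (topBidder b') ≤ ∑ k ∈ greedySolution b' w W, b' k := by
      calc b' (topBidder b') = b (topBidder b') := hfix _ hne'
        _ ≤ b (topBidder b) := topBidder_le b _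
        _ ≤ ∑ k ∈ greedySolution b w W, b k := h2
        _ ≤ ∑ k ∈ greedySolution b w W, b' k :=
            Finset.sum_le_sum (fun k _ => hble k)
        _ ≤ ∑ k ∈ greedySolution b' w W, b' k :=
            Finset.sum_le_sum_of_subset_of_nonneg (lemC hmem) (fun k _ _ => hb' k)
    exact h1 hchain
  · -- top bidder chosen both times: i is the new top bidder too
    rw [Finset.mem_singleton] at hmem ⊢
    have : topBidder b' = i := by
      refine topBidder_eq b' i (fun j hj => ?_)
      calc b' j = b j := hfix j hj
        _ ≤ b (topBidder b) := topBidder_le b j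
        _ = b i := by rw [hmem]
        _ < b' i := hup
    exact this.symm
end

section
/- Let n ≥ 1 bidders and m homogeneous units with m = n²·q for an integer q ≥ 1. Each bidder i has a valuation v_i : ℕ → ℝ that is nondecreasing on {0,…,m} with v_i(0) = 0 and v_i(s) ≥ 0. An allocation is a function a : Fin n → ℕ with ∑_i a i ≤ m; its welfare is ∑_i v_i(a i). Then the maximum welfare over allocations in which every a i is a multiple of q = m/n² is at least one half of the maximum welfare over all allocations. (This is the welfare guarantee of the maximum-in-range multi-unit auction that bundles the units into n² equal blocks.) -/
lemma roundup_ge (a q : ℕ) (hq : 0 < q) : a ≤ q * ((a + q - 1) / q) := by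
  have h1 : q * ((a + q - 1) / q) + (a + q - 1) % q = a + q - 1 :=
    Nat.div_add_mod _ _
  have h2 : (a + q - 1) % q < q := Nat.mod_lt _ hq
  generalize q * ((a + q - 1) / q) = u at h1 ⊢
  omega

lemma roundup_le (a q : ℕ) (hq : 0 < q) : q * ((a + q - 1) / q) ≤ a + (q - 1) := by
  have h := Nat.div_mul_le_self (a + q - 1) q
  have : q * ((a + q - 1) / q) = (a + q - 1) / q * q := Nat.mul_comm _ _
  omega

/-- **Welfare guarantee of the maximum-in-range multi-unit auction.**
With `n ≥ 1` bidders and `m = n²·q` homogeneous units (`q ≥ 1`), where each bidder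
`i` has a nonnegative valuation `v i : ℕ → ℝ` that is nondecreasing on `{0,…,m}` with
`v i 0 = 0`, the maximum welfare over allocations in which every bidder receives a
multiple of `q = m/n²` units is at least one half of the maximum welfare over all
allocations: there is an allocation `a` with every `a i` a multiple of `q` and
`∑ i, a i ≤ m` such that every allocation `a'` with `∑ i, a' i ≤ m` has welfare at
most twice that of `a`. -/
theorem mir_multi_unit_half_optimal
    (n q m : ℕ) (hn : 1 ≤ n) (hq : 1 ≤ q) (hm : m = n ^ 2 * q)
    (v : Fin n → ℕ → ℝ)
    (hv0 : ∀ i, v i 0 = 0)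
    (hvnonneg : ∀ i s, 0 ≤ v i s)
    (hvmono : ∀ i s t, s ≤ t → t ≤ m → v i s ≤ v i t) :
    ∃ a : Fin n → ℕ,
      (∀ i, q ∣ a i) ∧ (∑ i, a i ≤ m) ∧
      ∀ a' : Fin n → ℕ, (∑ i, a' i ≤ m) →
        ∑ i, v i (a' i) ≤ 2 * ∑ i, v i (a i) := by
  classical
  set N := n ^ 2 with hN
  have hqm : q * N = m := by rw [hm]; ring
  have hqpos : 0 < q := hq
  set S : Finset (Fin n → Fin (N + 1)) :=
    Finset.univ.filter (fun c => ∑ i, (c i : ℕ) ≤ N) with hSdef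
  have hS0 : (fun _ => (0 : Fin (N + 1))) ∈ S := by
    simp [hSdef]
  obtain ⟨c, hcS, hcmax⟩ :=
    S.exists_max_image (fun c => ∑ i, v i (q * (c i : ℕ))) ⟨_, hS0⟩
  have hcN : ∑ i, (c i : ℕ) ≤ N := (Finset.mem_filter.mp hcS).2
  refine ⟨fun i => q * (c i : ℕ), fun i => ⟨_, rfl⟩, ?_, ?_⟩
  · calc ∑ i, q * (c i : ℕ) = q * ∑ i, (c i : ℕ) := (Finset.mul_sum _ _ _).symm
      _ ≤ q * N := Nat.mul_le_mul_left _ hcN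
      _ = m := hqm
  · intro a' ha'
    have hne : (Finset.univ : Finset (Fin n)).Nonempty := by
      have : Nonempty (Fin n) := ⟨⟨0, hn⟩⟩
      exact Finset.univ_nonempty
    obtain ⟨j, -, hj⟩ := Finset.exists_max_image Finset.univ a' hne
    have hj' : ∀ i, a' i ≤ a' j := fun i => hj i (Finset.mem_univ i)
    have ha'le : ∀ i, a' i ≤ m := fun i =>
      le_trans (Finset.single_le_sum (fun _ _ => Nat.zero_le _) (Finset.mem_univ i)) ha'
    set r : Fin n → ℕ := fun i => (a' i + q - 1) / q with hrdef
    have hra : ∀ i, a' i ≤ q * r i := fun i => roundup_ge _ _ hqpos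
    have hrub : ∀ i, q * r i ≤ a' i + (q - 1) := fun i => roundup_le _ _ hqpos
    have hrN : ∀ i, r i ≤ N := by
      intro i
      have h := ha'le i
      have hx : a' i + q - 1 < (N + 1) * q := by
        have hNq : (N + 1) * q = m + q := by rw [← hqm]; ring
        omega
      exact Nat.lt_succ_iff.mp ((Nat.div_lt_iff_lt_mul hqpos).mpr hx)
    have hrm : ∀ i, q * r i ≤ m := fun i =>
      le_of_le_of_eq (Nat.mul_le_mul_left _ (hrN i)) hqm
    have hrmono : ∀ i, r i ≤ r j := by
      intro i
      exact Nat.div_le_div_right (by have := hj' i; omega)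
    -- cardinality of erase
    have hcard : (Finset.univ.erase j).card = n - 1 := by
      rw [Finset.card_erase_of_mem (Finset.mem_univ j), Finset.card_univ, Fintype.card_fin]
    -- key feasibility bound
    have hK : ∑ i ∈ Finset.univ.erase j, r i ≤ N := by
      set K := ∑ i ∈ Finset.univ.erase j, r i with hKdef
      set A := ∑ i ∈ Finset.univ.erase j, a' i with hAdef
      have hqK : q * K = ∑ i ∈ Finset.univ.erase j, (q * r i) := Finset.mul_sum _ _ _
      have hb1 : ∑ i ∈ Finset.univ.erase j, (q * r i)
          ≤ ∑ i ∈ Finset.univ.erase j, (a' i + (q - 1)) :=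
        Finset.sum_le_sum fun i _ => hrub i
      have hsum2 : ∑ i ∈ Finset.univ.erase j, (a' i + (q - 1)) = A + (n - 1) * (q - 1) := by
        rw [Finset.sum_add_distrib, Finset.sum_const, hcard, smul_eq_mul]
      have hAj : a' j + A = ∑ i, a' i := Finset.add_sum_erase _ _ (Finset.mem_univ j)
      rcases le_or_gt ((n - 1) * (q - 1)) (a' j) with hcase | hcase
      · have h1 : q * K ≤ q * N := by
          calc q * K ≤ A + (n - 1) * (q - 1) := by omega
            _ ≤ A + a' j := by omega
            _ ≤ m := by omega
            _ = q * N := hqm.symm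
        exact Nat.le_of_mul_le_mul_left h1 hqpos
      · have h2 : K ≤ (n - 1) * r j := by
          calc K ≤ ∑ _i ∈ Finset.univ.erase j, r j :=
                Finset.sum_le_sum fun i _ => hrmono i
            _ = (n - 1) * r j := by rw [Finset.sum_const, hcard, smul_eq_mul]
        have e1 : q * K ≤ (n - 1) * (q * r j) := by
          calc q * K ≤ q * ((n - 1) * r j) := Nat.mul_le_mul_left _ h2
            _ = (n - 1) * (q * r j) := by ring
        have e2 : (n - 1) * (q * r j) ≤ (n - 1) * (a' j + (q - 1)) :=
          Nat.mul_le_mul_left _ (hrub j)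
        have e3 : (n - 1) * (a' j + (q - 1)) ≤ (n - 1) * ((n - 1) * (q - 1) + (q - 1)) :=
          Nat.mul_le_mul_left _ (by omega)
        have e4 : (n - 1) * ((n - 1) * (q - 1) + (q - 1)) = (n - 1) * (n * (q - 1)) := by
          have hn1 : (n - 1) + 1 = n := by omega
          calc (n - 1) * ((n - 1) * (q - 1) + (q - 1)) = (n - 1) * (((n - 1) + 1) * (q - 1)) := by ring
            _ = (n - 1) * (n * (q - 1)) := by rw [hn1]
        have e5 : (n - 1) * (n * (q - 1)) ≤ n * (n * q) :=
          Nat.mul_le_mul (by omega) (Nat.mul_le_mul_left _ (by omega))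
        have e6 : n * (n * q) = q * N := by rw [hN]; ring
        have h1 : q * K ≤ q * N := by omega
        exact Nat.le_of_mul_le_mul_left h1 hqpos
    -- candidate allocations in range
    set c1 : Fin n → Fin (N + 1) :=
      (fun i => if i = j then ⟨N, Nat.lt_succ_self N⟩ else 0) with hc1def
    set c2 : Fin n → Fin (N + 1) :=
      (fun i => if i = j then 0 else ⟨r i, Nat.lt_succ_of_le (hrN i)⟩) with hc2def
    have hc1 : ∀ i, (c1 i : ℕ) = if i = j then N else 0 := by
      intro i
      rw [hc1def]
      by_cases h : i = j <;> simp [h]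
    have hc2 : ∀ i, (c2 i : ℕ) = if i = j then 0 else r i := by
      intro i
      rw [hc2def]
      by_cases h : i = j <;> simp [h]
    have hc1S : c1 ∈ S := by
      rw [hSdef, Finset.mem_filter]
      refine ⟨Finset.mem_univ _, ?_⟩
      have : ∑ i, (c1 i : ℕ) = ∑ i, if i = j then N else 0 :=
        Finset.sum_congr rfl fun i _ => hc1 i
      rw [this, Finset.sum_ite_eq' Finset.univ j (fun _ => N)]
      simp
    have hc2S : c2 ∈ S := by
      rw [hSdef, Finset.mem_filter]
      refine ⟨Finset.mem_univ _, ?_⟩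
      have h1 : ∑ i, (c2 i : ℕ) = ∑ i ∈ Finset.univ.erase j, r i := by
        rw [← Finset.add_sum_erase _ (fun i => ((c2 i : ℕ))) (Finset.mem_univ j)]
        rw [hc2 j, if_pos rfl, zero_add]
        exact Finset.sum_congr rfl fun i hi => by
          rw [hc2 i, if_neg (Finset.ne_of_mem_erase hi)]
      rw [h1]; exact hK
    have hW1 : ∑ i, v i (q * (c1 i : ℕ)) = v j m := by
      rw [← Finset.add_sum_erase _ _ (Finset.mem_univ j)]
      have h1 : v j (q * (c1 j : ℕ)) = v j m := by
        rw [hc1 j, if_pos rfl, hqm]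
      have h2 : ∀ i ∈ Finset.univ.erase j, v i (q * (c1 i : ℕ)) = 0 := by
        intro i hi
        rw [hc1 i, if_neg (Finset.ne_of_mem_erase hi), Nat.mul_zero]
        exact hv0 i
      rw [h1, Finset.sum_eq_zero h2, add_zero]
    have hW2 : ∑ i, v i (q * (c2 i : ℕ)) = ∑ i ∈ Finset.univ.erase j, v i (q * r i) := by
      rw [← Finset.add_sum_erase _ _ (Finset.mem_univ j)]
      have h1 : v j (q * (c2 j : ℕ)) = 0 := by
        rw [hc2 j, if_pos rfl, Nat.mul_zero]; exact hv0 j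
      rw [h1, zero_add]
      exact Finset.sum_congr rfl fun i hi => by
        rw [hc2 i, if_neg (Finset.ne_of_mem_erase hi)]
    have hmax1 := hcmax c1 hc1S
    have hmax2 := hcmax c2 hc2S
    calc ∑ i, v i (a' i)
        = v j (a' j) + ∑ i ∈ Finset.univ.erase j, v i (a' i) :=
          (Finset.add_sum_erase _ _ (Finset.mem_univ j)).symm
      _ ≤ v j m + ∑ i ∈ Finset.univ.erase j, v i (q * r i) := by
          refine add_le_add (hvmono j _ m (ha'le j) le_rfl) ?_
          exact Finset.sum_le_sum fun i _ => hvmono i _ _ (hra i) (hrm i)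
      _ = (∑ i, v i (q * (c1 i : ℕ))) + (∑ i, v i (q * (c2 i : ℕ))) := by
          rw [hW1, hW2]
      _ ≤ (∑ i, v i (q * (c i : ℕ))) + (∑ i, v i (q * (c i : ℕ))) :=
          add_le_add hmax1 hmax2
      _ = 2 * ∑ i, v i (q * (c i : ℕ)) := by ring
end

section
/- For a regular valuation distribution on [0,B] with virtual value function φ, if X is a random variable with CDF F then E[max(φ(X), 0)] = max_{p ∈ [0,B]} p·(1 − F(p)). (For a single bidder, the optimal expected virtual surplus equals the monopoly revenue.) -/
open MeasureTheory

open Set in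
/-- **Optimal expected virtual surplus equals the monopoly revenue.**
For a regular valuation distribution on `[0,B]` (CDF `F`, density `f = F' > 0`,
`F 0 = 0`, `F B = 1`, nondecreasing virtual value `φ x = x − (1 − F x)/f x`), if `X`
is a random variable with CDF `F` (supported on `[0,B]`), then
`E[max(φ(X), 0)] = max_{p ∈ [0,B]} p·(1 − F p)`. -/
theorem expected_positive_virtual_value_eq_monopoly_revenue
    (B : ℝ) (hB : 0 < B) (F f : ℝ → ℝ)
    (hderiv : ∀ x ∈ Set.Icc 0 B, HasDerivAt F (f x) x)
    (hfcont : ContinuousOn f (Set.Icc 0 B))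
    (hfpos : ∀ x ∈ Set.Icc 0 B, 0 < f x)
    (hF0 : F 0 = 0) (hFB : F B = 1)
    (hreg : MonotoneOn (fun x => x - (1 - F x) / f x) (Set.Icc 0 B))
    {Ω : Type*} [MeasurableSpace Ω] (μ : Measure Ω) [IsProbabilityMeasure μ]
    (X : Ω → ℝ) (hX : Measurable X)
    (hsupp : ∀ ω, X ω ∈ Set.Icc 0 B)
    (hcdf : ∀ x ∈ Set.Icc 0 B, (μ {ω | X ω ≤ x}).toReal = F x) :
    ∫ ω, max (X ω - (1 - F (X ω)) / f (X ω)) 0 ∂μ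
      = sSup ((fun p => p * (1 - F p)) '' Set.Icc 0 B) := by
  set φ : ℝ → ℝ := fun x => x - (1 - F x) / f x with hφdef
  set g : ℝ → ℝ := fun x => max (φ x) 0 with hgdef
  have hB' : (0:ℝ) ≤ B := hB.le
  have hFcont : ContinuousOn F (Icc 0 B) := fun x hx =>
    ((hderiv x hx).continuousAt).continuousWithinAt
  have hφcont : ContinuousOn φ (Icc 0 B) := by
    exact continuousOn_id.sub
      ((continuousOn_const.sub hFcont).div hfcont (fun x hx => (hfpos x hx).ne'))
  have hgcont : ContinuousOn g (Icc 0 B) := hφcont.sup continuousOn_const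
  have hFTC : ∀ a b, a ∈ Icc (0:ℝ) B → b ∈ Icc (0:ℝ) B → a ≤ b →
      ∫ x in a..b, f x = F b - F a := by
    intro a b ha hb hab
    have hsub : uIcc a b ⊆ Icc 0 B := by
      rw [uIcc_of_le hab]; exact Icc_subset_Icc ha.1 hb.2
    exact intervalIntegral.integral_eq_sub_of_hasDerivAt
      (fun x hx => hderiv x (hsub hx))
      ((hfcont.mono hsub).intervalIntegrable)
  have hφfcont : ContinuousOn (fun x => φ x * f x) (Icc 0 B) := hφcont.mul hfcont
  have hR : ∀ p ∈ Icc (0:ℝ) B, ∫ x in p..B, φ x * f x = p * (1 - F p) := by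
    intro p hp
    have hsub : uIcc p B ⊆ Icc 0 B := by
      rw [uIcc_of_le hp.2]; exact Icc_subset_Icc hp.1 le_rfl
    have key : ∀ x ∈ uIcc p B, HasDerivAt (fun y => y * F y - y) (φ x * f x) x := by
      intro x hx
      have hx' := hsub hx
      have h1 : HasDerivAt (fun y => y * F y - y) (1 * F x + x * f x - 1) x :=
        ((hasDerivAt_id x).mul (hderiv x hx')).sub (hasDerivAt_id x)
      convert h1 using 1
      have hf := (hfpos x hx').ne'
      simp only [hφdef]
      field_simp [hφdef]
      ring
    rw [intervalIntegral.integral_eq_sub_of_hasDerivAt key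
      ((hφfcont.mono hsub).intervalIntegrable)]
    rw [hFB]; ring
  -- the crossing point
  have hφ0 : φ 0 < 0 := by
    have h0 : (0:ℝ) ∈ Icc (0:ℝ) B := ⟨le_rfl, hB'⟩
    have := hfpos 0 h0
    simp only [hφdef, hF0, sub_zero, zero_sub, neg_neg]
    have : (0:ℝ) < 1 / f 0 := by positivity
    linarith
  have hφB : φ B = B := by simp [hφdef, hFB]
  obtain ⟨c, hc, hφc⟩ : ∃ c ∈ Icc (0:ℝ) B, φ c = 0 := by
    have h := intermediate_value_Icc hB' hφcont
    have h0 : (0:ℝ) ∈ Icc (φ 0) (φ B) := ⟨hφ0.le, by rw [hφB]; exact hB'⟩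
    obtain ⟨c, hc, hcc⟩ := h h0
    exact ⟨c, hc, hcc⟩
  have hneg : ∀ x ∈ Icc (0:ℝ) B, x ≤ c → φ x ≤ 0 :=
    fun x hx hxc => (hreg hx hc hxc).trans hφc.le
  have hpos : ∀ x ∈ Icc (0:ℝ) B, c ≤ x → 0 ≤ φ x :=
    fun x hx hcx => hφc ▸ hreg hc hx hcx
  -- integral of positive part
  have hgf : ContinuousOn (fun x => g x * f x) (Icc 0 B) := hgcont.mul hfcont
  have hsub1 : uIcc (0:ℝ) c ⊆ Icc 0 B := by
    rw [uIcc_of_le hc.1]; exact Icc_subset_Icc le_rfl hc.2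
  have hsub2 : uIcc c B ⊆ Icc 0 B := by
    rw [uIcc_of_le hc.2]; exact Icc_subset_Icc hc.1 le_rfl
  have hsplit : ∫ x in (0:ℝ)..B, g x * f x = ∫ x in c..B, φ x * f x := by
    have h1 : IntervalIntegrable (fun x => g x * f x) volume 0 c :=
      (hgf.mono hsub1).intervalIntegrable
    have h2 : IntervalIntegrable (fun x => g x * f x) volume c B :=
      (hgf.mono hsub2).intervalIntegrable
    rw [← intervalIntegral.integral_add_adjacent_intervals h1 h2]
    have e1 : ∫ x in (0:ℝ)..c, g x * f x = ∫ x in (0:ℝ)..c, (0:ℝ) := by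
      apply intervalIntegral.integral_congr
      intro x hx
      have hx' : x ∈ Icc 0 c := by rwa [uIcc_of_le hc.1] at hx
      have : φ x ≤ 0 := hneg x (hsub1 (by rwa [uIcc_of_le hc.1])) hx'.2
      simp [hgdef, max_eq_right this]
    have e2 : ∫ x in c..B, g x * f x = ∫ x in c..B, φ x * f x := by
      apply intervalIntegral.integral_congr
      intro x hx
      have hx' : x ∈ Icc c B := by rwa [uIcc_of_le hc.2] at hx
      have : 0 ≤ φ x := hpos x (hsub2 (by rwa [uIcc_of_le hc.2])) hx'.1
      simp [hgdef, max_eq_left this]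
    rw [e1, e2]; simp
  -- the pushforward measure
  set ν : Measure ℝ :=
    (volume.restrict (Icc 0 B)).withDensity (fun x => ENNReal.ofReal (f x)) with hνdef
  have hlin : ∀ a ∈ Icc (0:ℝ) B,
      ∫⁻ x in Icc (0:ℝ) a, ENNReal.ofReal (f x) = ENNReal.ofReal (F a) := by
    intro a ha
    have hint : IntegrableOn f (Icc 0 a) volume :=
      (hfcont.mono (Icc_subset_Icc le_rfl ha.2)).integrableOn_Icc
    rw [← ofReal_integral_eq_lintegral_ofReal hint ?_]
    · congr 1
      rw [integral_Icc_eq_integral_Ioc, ← intervalIntegral.integral_of_le ha.1,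
        hFTC 0 a ⟨le_rfl, hB'⟩ ha ha.1, hF0, sub_zero]
    · filter_upwards [ae_restrict_mem measurableSet_Icc] with x hx
      exact (hfpos x (Icc_subset_Icc le_rfl ha.2 hx)).le
  have hνfin : IsFiniteMeasure ν := by
    constructor
    rw [hνdef, withDensity_apply _ MeasurableSet.univ, Measure.restrict_restrict MeasurableSet.univ,
      Set.univ_inter, hlin B ⟨hB', le_rfl⟩]
    exact ENNReal.ofReal_lt_top
  have hmap : μ.map X = ν := by
    have : IsProbabilityMeasure (μ.map X) := Measure.isProbabilityMeasure_map hX.aemeasurable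
    refine Measure.ext_of_Iic (μ.map X) ν (fun a => ?_)
    rw [Measure.map_apply hX measurableSet_Iic, hνdef,
      withDensity_apply _ measurableSet_Iic, Measure.restrict_restrict measurableSet_Iic]
    rcases lt_or_ge a 0 with h | h
    · have h1 : X ⁻¹' Iic a = ∅ := by
        ext ω; simp only [mem_preimage, mem_Iic, mem_empty_iff_false, iff_false, not_le]
        exact h.trans_le (hsupp ω).1
      have h2 : Iic a ∩ Icc 0 B = ∅ := by
        ext x; simp only [mem_inter_iff, mem_Iic, mem_Icc, mem_empty_iff_false, iff_false]
        rintro ⟨hx1, hx2, _⟩; linarith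
      rw [h1, h2]; simp
    · rcases le_or_gt a B with h' | h'
      · have h2 : Iic a ∩ Icc 0 B = Icc 0 a := by
          ext x; simp only [mem_inter_iff, mem_Iic, mem_Icc]
          constructor
          · rintro ⟨hx1, hx2, _⟩; exact ⟨hx2, hx1⟩
          · rintro ⟨hx1, hx2⟩; exact ⟨hx2, hx1, hx2.trans h'⟩
        rw [h2, hlin a ⟨h, h'⟩]
        have hc1 := hcdf a ⟨h, h'⟩
        have hne : μ {ω | X ω ≤ a} ≠ ⊤ := measure_ne_top μ _
        have : X ⁻¹' Iic a = {ω | X ω ≤ a} := rfl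
        rw [this, ← hc1, ENNReal.ofReal_toReal hne]
      · have h1 : X ⁻¹' Iic a = Set.univ := by
          ext ω; simp only [mem_preimage, mem_Iic, mem_univ, iff_true]
          exact (hsupp ω).2.trans h'.le
        have h2 : Iic a ∩ Icc 0 B = Icc 0 B :=
          inter_eq_right.2 (fun x hx => hx.2.trans h'.le)
        rw [h1, h2, hlin B ⟨hB', le_rfl⟩, hFB]
        simp
  -- integral conversion
  have hmain : ∫ ω, g (X ω) ∂μ = ∫ x in (0:ℝ)..B, g x * f x := by
    have hgm : AEStronglyMeasurable g (μ.map X) := by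
      rw [hmap, hνdef]
      exact (hgcont.aestronglyMeasurable measurableSet_Icc).mono_ac
        (withDensity_absolutelyContinuous _ _)
    rw [← integral_map hX.aemeasurable hgm, hmap, hνdef]
    have hfae : AEMeasurable (fun x => (f x).toNNReal) (volume.restrict (Icc 0 B)) :=
      (hfcont.aemeasurable measurableSet_Icc).real_toNNReal
    have hcoe : (fun x => ENNReal.ofReal (f x)) = fun x => ((f x).toNNReal : ENNReal) := rfl
    rw [hcoe, integral_withDensity_eq_integral_smul₀ hfae g]
    rw [intervalIntegral.integral_of_le hB', ← integral_Icc_eq_integral_Ioc]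
    refine setIntegral_congr_fun measurableSet_Icc (fun x hx => ?_)
    simp [NNReal.smul_def, Real.coe_toNNReal _ (hfpos x hx).le, mul_comm]
  -- the revenue bound
  have hbound : ∀ p ∈ Icc (0:ℝ) B, p * (1 - F p) ≤ c * (1 - F c) := by
    intro p hp
    rw [← hR p hp, ← hR c hc]
    rcases le_total p c with hpc | hcp
    · have hsubpc : uIcc p c ⊆ Icc 0 B := by
        rw [uIcc_of_le hpc]; exact Icc_subset_Icc hp.1 hc.2
      have hi1 : IntervalIntegrable (fun x => φ x * f x) volume p c :=
        (hφfcont.mono hsubpc).intervalIntegrable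
      have hi2 : IntervalIntegrable (fun x => φ x * f x) volume c B :=
        (hφfcont.mono hsub2).intervalIntegrable
      rw [← intervalIntegral.integral_add_adjacent_intervals hi1 hi2]
      have hnp : (0:ℝ) ≤ ∫ x in p..c, -(φ x * f x) := by
        apply intervalIntegral.integral_nonneg hpc
        intro u hu
        have hu' : u ∈ Icc 0 B := ⟨hp.1.trans hu.1, hu.2.trans hc.2⟩
        have h1 := hneg u hu' hu.2
        have h2 := (hfpos u hu').le
        nlinarith
      rw [intervalIntegral.integral_neg] at hnp
      linarith
    · have hsubcp : uIcc c p ⊆ Icc 0 B := by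
        rw [uIcc_of_le hcp]; exact Icc_subset_Icc hc.1 hp.2
      have hi1 : IntervalIntegrable (fun x => φ x * f x) volume c p :=
        (hφfcont.mono hsubcp).intervalIntegrable
      have hi2 : IntervalIntegrable (fun x => φ x * f x) volume p B :=
        (hφfcont.mono (by rw [uIcc_of_le hp.2]; exact Icc_subset_Icc hp.1 le_rfl)).intervalIntegrable
      rw [← intervalIntegral.integral_add_adjacent_intervals hi1 hi2]
      have hnn : (0:ℝ) ≤ ∫ x in c..p, φ x * f x := by
        apply intervalIntegral.integral_nonneg hcp
        intro u hu
        have hu' : u ∈ Icc 0 B := ⟨hc.1.trans hu.1, hu.2.trans hp.2⟩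
        have h1 := hpos u hu' hu.1
        have h2 := (hfpos u hu').le
        nlinarith
      linarith
  -- assemble
  have hsup : sSup ((fun p => p * (1 - F p)) '' Icc 0 B) = c * (1 - F c) := by
    apply le_antisymm
    · apply csSup_le ((Set.nonempty_Icc.mpr hB').image _)
      rintro _ ⟨p, hp, rfl⟩
      exact hbound p hp
    · exact le_csSup ⟨c * (1 - F c), by rintro _ ⟨p, hp, rfl⟩; exact hbound p hp⟩ ⟨c, hc, rfl⟩
  calc ∫ ω, max (X ω - (1 - F (X ω)) / f (X ω)) 0 ∂μ
      = ∫ ω, g (X ω) ∂μ := rfl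
    _ = ∫ x in (0:ℝ)..B, g x * f x := hmain
    _ = ∫ x in c..B, φ x * f x := hsplit
    _ = c * (1 - F c) := hR c hc
    _ = sSup ((fun p => p * (1 - F p)) '' Icc 0 B) := hsup.symm
end

section
/- Single-bidder Myerson payment identity: let F be a valuation distribution on [0,B] with density f and virtual value function φ, let x : [0,B] → [0,1] be a nondecreasing allocation rule, and define the payment rule p(v) = v·x(v) − ∫_0^v x(t) dt. If X is a random variable with CDF F, then E[p(X)] = E[φ(X)·x(X)]; i.e., the expected payment equals the expected virtual value served. -/
open MeasureTheory

/-- **Single-bidder Myerson payment identity.**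
Let `F` be a valuation distribution on `[0,B]` (continuously differentiable CDF with
density `f = F' > 0`, `F 0 = 0`, `F B = 1`) with virtual value `φ x = x − (1 − F x)/f x`,
let `x` be a nondecreasing allocation rule `[0,B] → [0,1]`, and define the payment rule
`p v = v·x v − ∫_0^v x t dt`.  If `X` is a random variable with CDF `F` (supported on
`[0,B]`), then `E[p(X)] = E[φ(X)·x(X)]`. -/
theorem myerson_payment_identity
    (B : ℝ) (hB : 0 < B) (F f : ℝ → ℝ)
    (hderiv : ∀ y ∈ Set.Icc 0 B, HasDerivAt F (f y) y)
    (hfcont : ContinuousOn f (Set.Icc 0 B))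
    (hfpos : ∀ y ∈ Set.Icc 0 B, 0 < f y)
    (hF0 : F 0 = 0) (hFB : F B = 1)
    (x : ℝ → ℝ)
    (hxmono : MonotoneOn x (Set.Icc 0 B))
    (hxrange : ∀ v ∈ Set.Icc 0 B, x v ∈ Set.Icc 0 1)
    {Ω : Type*} [MeasurableSpace Ω] (μ : Measure Ω) [IsProbabilityMeasure μ]
    (X : Ω → ℝ) (hX : Measurable X)
    (hsupp : ∀ ω, X ω ∈ Set.Icc 0 B)
    (hcdf : ∀ y ∈ Set.Icc 0 B, (μ {ω | X ω ≤ y}).toReal = F y) :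
    ∫ ω, (X ω * x (X ω) - ∫ t in (0 : ℝ)..(X ω), x t) ∂μ
      = ∫ ω, (X ω - (1 - F (X ω)) / f (X ω)) * x (X ω) ∂μ := by
  classical
  -- clamp to [0,B]
  set c : ℝ → ℝ := fun t => max 0 (min t B) with hc_def
  have hc_mem : ∀ t, c t ∈ Set.Icc (0:ℝ) B :=
    fun t => ⟨le_max_left _ _, max_le hB.le (min_le_right _ _)⟩
  have hc_id : ∀ t ∈ Set.Icc (0:ℝ) B, c t = t := by
    intro t ht
    simp [hc_def, min_eq_left ht.2, max_eq_right ht.1]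
  have hc_cont : Continuous c := continuous_const.max (continuous_id.min continuous_const)
  have hc_mono : Monotone c := fun s t hst => max_le_max le_rfl (min_le_min hst le_rfl)
  -- primed versions
  set x' : ℝ → ℝ := fun t => x (c t) with hx'_def
  have hx'mono : Monotone x' := fun s t hst => hxmono (hc_mem s) (hc_mem t) (hc_mono hst)
  have hx'meas : Measurable x' := hx'mono.measurable
  have hx'range : ∀ t, x' t ∈ Set.Icc (0:ℝ) 1 := fun t => hxrange _ (hc_mem t)
  have hx'eq : ∀ t ∈ Set.Icc (0:ℝ) B, x' t = x t := by
    intro t ht; simp only [hx'_def, hc_id t ht]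
  set F' : ℝ → ℝ := fun t => F (c t) with hF'_def
  set f' : ℝ → ℝ := fun t => f (c t) with hf'_def
  have hFcont : ContinuousOn F (Set.Icc 0 B) :=
    fun t ht => ((hderiv t ht).continuousAt).continuousWithinAt
  have hF'cont : Continuous F' := hFcont.comp_continuous hc_cont hc_mem
  have hf'cont : Continuous f' := hfcont.comp_continuous hc_cont hc_mem
  have hf'pos : ∀ t, 0 < f' t := fun t => hfpos _ (hc_mem t)
  have hF'eq : ∀ t ∈ Set.Icc (0:ℝ) B, F' t = F t := by
    intro t ht; simp only [hF'_def, hc_id t ht]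
  have hf'eq : ∀ t ∈ Set.Icc (0:ℝ) B, f' t = f t := by
    intro t ht; simp only [hf'_def, hc_id t ht]
  have hF'0 : F' 0 = 0 := by
    rw [hF'eq 0 ⟨le_rfl, hB.le⟩, hF0]
  have hF'B : F' B = 1 := by
    rw [hF'eq B ⟨hB.le, le_rfl⟩, hFB]
  have hF'deriv : ∀ t ∈ Set.Ioo (0:ℝ) B, HasDerivAt F' (f' t) t := by
    intro t ht
    have h1 : F' =ᶠ[nhds t] F := by
      filter_upwards [Ioo_mem_nhds ht.1 ht.2] with s hs
      exact hF'eq s (Set.Ioo_subset_Icc_self hs)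
    rw [hf'eq t (Set.Ioo_subset_Icc_self ht)]
    exact (hderiv t (Set.Ioo_subset_Icc_self ht)).congr_of_eventuallyEq h1
  -- primitive of x'
  have hx'int : ∀ a b : ℝ, IntervalIntegrable x' volume a b := fun a b =>
    hx'mono.intervalIntegrable
  set G : ℝ → ℝ := fun v => ∫ t in (0:ℝ)..v, x' t with hG_def
  have hGcont : Continuous G := intervalIntegral.continuous_primitive hx'int 0
  have hG0 : G 0 = 0 := intervalIntegral.integral_same
  -- FTC for F'
  have hf'FTC : ∀ m : ℝ, 0 ≤ m → m ≤ B → (∫ t in (0:ℝ)..m, f' t) = F' m := by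
    intro m hm hmB
    have h := integral_eq_of_hasDerivAt_off_countable_of_le F' f' hm
      Set.countable_empty hF'cont.continuousOn
      (fun t ht => hF'deriv t ⟨ht.1.1, lt_of_lt_of_le ht.1.2 hmB⟩)
      (hf'cont.intervalIntegrable _ _)
    rw [h, hF'0, sub_zero]
  -- identification of the law of X
  haveI : IsProbabilityMeasure (μ.map X) := Measure.isProbabilityMeasure_map hX.aemeasurable
  set ρ : Measure ℝ :=
    (volume.restrict (Set.Icc 0 B)).withDensity (fun t => ENNReal.ofReal (f' t)) with hρ_def
  have hcy0 : ∀ y : ℝ, y < 0 → c y = 0 := by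
    intro y hy
    simp [hc_def, min_eq_left (le_of_lt (lt_of_lt_of_le hy hB.le)), max_eq_left hy.le]
  have hmap : μ.map X = ρ := by
    refine Measure.ext_of_Iic (μ.map X) ρ (fun y => ?_)
    have hνy : (μ.map X) (Set.Iic y) = ENNReal.ofReal (F' y) := by
      rw [Measure.map_apply hX measurableSet_Iic]
      rcases lt_or_ge y 0 with hy | hy
      · have he : X ⁻¹' Set.Iic y = ∅ := by
          ext ω
          simp only [Set.mem_preimage, Set.mem_Iic, Set.mem_empty_iff_false, iff_false, not_le]
          exact lt_of_lt_of_le hy (hsupp ω).1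
        rw [he, measure_empty]
        simp [hF'_def, hcy0 y hy, hF0]
      · rcases le_or_gt y B with hyB | hyB
        · have h1 := hcdf y ⟨hy, hyB⟩
          have h2 : X ⁻¹' Set.Iic y = {ω | X ω ≤ y} := rfl
          rw [h2, hF'eq y ⟨hy, hyB⟩, ← h1, ENNReal.ofReal_toReal (measure_ne_top _ _)]
        · have he : X ⁻¹' Set.Iic y = Set.univ := by
            ext ω
            simp only [Set.mem_preimage, Set.mem_Iic, Set.mem_univ, iff_true]
            exact (hsupp ω).2.trans hyB.le
          have hcB : c y = B := by
            simp [hc_def, min_eq_right hyB.le, max_eq_right hB.le]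
          rw [he, measure_univ]
          simp [hF'_def, hcB, hFB]
    have hρy : ρ (Set.Iic y) = ENNReal.ofReal (F' y) := by
      rw [hρ_def, withDensity_apply _ measurableSet_Iic,
        Measure.restrict_restrict measurableSet_Iic]
      have hset : Set.Iic y ∩ Set.Icc 0 B = Set.Icc 0 (min B y) := by
        ext t
        simp only [Set.mem_inter_iff, Set.mem_Iic, Set.mem_Icc, le_min_iff]
        tauto
      rw [hset]
      rcases lt_or_ge (min B y) 0 with hm | hm
      · have hy : y < 0 := by
          by_contra h
          push_neg at h
          exact absurd (le_min hB.le h) (not_le.mpr hm)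
        rw [Set.Icc_eq_empty (not_le.mpr hm), Measure.restrict_empty, lintegral_zero_measure]
        simp [hF'_def, hcy0 y hy, hF0]
      · have hmB : min B y ≤ B := min_le_left _ _
        have hint : IntegrableOn f' (Set.Icc 0 (min B y)) volume :=
          hf'cont.integrableOn_Icc
        rw [← ofReal_integral_eq_lintegral_ofReal hint
          (Filter.Eventually.of_forall fun t => (hf'pos t).le)]
        have hcongr : (∫ t in Set.Icc 0 (min B y), f' t) = F' (min B y) := by
          rw [integral_Icc_eq_integral_Ioc, ← intervalIntegral.integral_of_le hm]
          exact hf'FTC _ hm hmB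
        have hcc : c (min B y) = c y := by
          simp only [hc_def, min_comm B y, inf_assoc, inf_idem]
        rw [hcongr]
        simp only [hF'_def, hcc]
    rw [hνy, hρy]
  -- transfer of integrals
  have transfer : ∀ g : ℝ → ℝ, Measurable g →
      (∫ ω, g (X ω) ∂μ) = ∫ t in Set.Icc (0:ℝ) B, f t * g t := by
    intro g hg
    rw [← integral_map hX.aemeasurable hg.aestronglyMeasurable, hmap, hρ_def]
    have hd : (fun t => ENNReal.ofReal (f' t))
        = fun t => ((f' t).toNNReal : ENNReal) := rfl
    rw [hd, integral_withDensity_eq_integral_smul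
      (hf'cont.measurable.real_toNNReal) g]
    refine setIntegral_congr_fun measurableSet_Icc (fun t ht => ?_)
    rw [NNReal.smul_def, hf'eq t ht, Real.coe_toNNReal _ (hfpos t ht).le, smul_eq_mul]
  -- rewrite the two integrands using the primed data
  set g1 : ℝ → ℝ := fun t => t * x' t - G t with hg1_def
  set g2 : ℝ → ℝ := fun t => (t - (1 - F' t) / f' t) * x' t with hg2_def
  have hg1meas : Measurable g1 := (measurable_id.mul hx'meas).sub hGcont.measurable
  have hvirt_cont : Continuous fun t => (1 - F' t) / f' t :=
    (continuous_const.sub hF'cont).div hf'cont fun t => (hf'pos t).ne'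
  have hg2meas : Measurable g2 :=
    (measurable_id.sub hvirt_cont.measurable).mul hx'meas
  have hL : (∫ ω, (X ω * x (X ω) - ∫ t in (0 : ℝ)..(X ω), x t) ∂μ)
      = ∫ ω, g1 (X ω) ∂μ := by
    refine integral_congr_ae (Filter.Eventually.of_forall fun ω => ?_)
    have h1 : x (X ω) = x' (X ω) := (hx'eq _ (hsupp ω)).symm
    have h2 : (∫ t in (0:ℝ)..(X ω), x t) = G (X ω) := by
      refine intervalIntegral.integral_congr fun t ht => ?_
      rw [Set.uIcc_of_le (hsupp ω).1] at ht
      exact (hx'eq t ⟨ht.1, ht.2.trans (hsupp ω).2⟩).symm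
    simp only [hg1_def, h1, h2]
  have hR : (∫ ω, (X ω - (1 - F (X ω)) / f (X ω)) * x (X ω) ∂μ)
      = ∫ ω, g2 (X ω) ∂μ := by
    refine integral_congr_ae (Filter.Eventually.of_forall fun ω => ?_)
    simp only [hg2_def, hx'eq _ (hsupp ω), hF'eq _ (hsupp ω), hf'eq _ (hsupp ω)]
  rw [hL, hR, transfer g1 hg1meas, transfer g2 hg2meas]
  -- integrability helper: (continuous) * x' + (continuous) is integrable on [0,B]
  have bddInt : ∀ φ ψ : ℝ → ℝ, Continuous φ → Continuous ψ →
      IntegrableOn (fun t => φ t * x' t + ψ t) (Set.Icc (0:ℝ) B) volume := by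
    intro φ ψ hφ hψ
    obtain ⟨Cφ, hCφ⟩ := isCompact_Icc.exists_bound_of_continuousOn hφ.continuousOn
    obtain ⟨Cψ, hCψ⟩ := isCompact_Icc.exists_bound_of_continuousOn hψ.continuousOn
    refine Integrable.mono' (integrable_const (Cφ + Cψ))
      ((hφ.measurable.mul hx'meas).add hψ.measurable).aestronglyMeasurable ?_
    filter_upwards [ae_restrict_mem measurableSet_Icc] with t ht
    have h1 := hCφ t ht
    have h2 := hCψ t ht
    have h3 := (hx'range t).1
    have h4 := (hx'range t).2
    have h5 : |φ t * x' t| ≤ Cφ := by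
      rw [abs_mul, abs_of_nonneg h3]
      calc |φ t| * x' t ≤ |φ t| * 1 := mul_le_mul_of_nonneg_left h4 (abs_nonneg _)
        _ = |φ t| := mul_one _
        _ ≤ Cφ := by simpa using h1
    calc ‖φ t * x' t + ψ t‖ ≤ |φ t * x' t| + |ψ t| := abs_add_le _ _
      _ ≤ Cφ + Cψ := add_le_add h5 (by simpa using h2)
  -- integration by parts via FTC off a countable set
  have hIoo : IntervalIntegrable (fun t => x' t * F' t + G t * f' t) volume 0 B := by
    rw [intervalIntegrable_iff_integrableOn_Icc_of_le hB.le]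
    exact (bddInt F' (fun t => G t * f' t) hF'cont (hGcont.mul hf'cont)).congr_fun
      (fun t ht => by ring) measurableSet_Icc
  have hs := hx'mono.countable_not_continuousAt
  have hparts : (∫ t in (0:ℝ)..B, (x' t * F' t + G t * f' t)) = G B := by
    have H := integral_eq_of_hasDerivAt_off_countable_of_le
      (fun t => G t * F' t) (fun t => x' t * F' t + G t * f' t) hB.le hs
      ((hGcont.mul hF'cont).continuousOn) ?_ hIoo
    · rw [H]
      show G B * F' B - G 0 * F' 0 = G B
      rw [hF'B, hG0]
      ring
    · intro t ht
      have hGt : HasDerivAt G (x' t) t :=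
        intervalIntegral.integral_hasDerivAt_right (hx'int 0 t)
          hx'meas.stronglyMeasurable.stronglyMeasurableAtFilter
          (by simpa using ht.2)
      exact hGt.mul (hF'deriv t ht.1)
  have hx'Icc : IntegrableOn x' (Set.Icc (0:ℝ) B) volume :=
    (intervalIntegrable_iff_integrableOn_Icc_of_le hB.le).1 (hx'int 0 B)
  have hd_main : IntegrableOn (fun t => x' t * F' t + G t * f' t)
      (Set.Icc (0:ℝ) B) volume :=
    (intervalIntegrable_iff_integrableOn_Icc_of_le hB.le).1 hIoo
  set d : ℝ → ℝ := fun t => x' t * F' t + G t * f' t - x' t with hd_def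
  have hd_int : IntegrableOn d (Set.Icc (0:ℝ) B) volume := hd_main.sub hx'Icc
  have hd0 : (∫ t in Set.Icc (0:ℝ) B, d t) = 0 := by
    rw [hd_def, integral_sub hd_main hx'Icc]
    have e1 : (∫ t in Set.Icc (0:ℝ) B, (x' t * F' t + G t * f' t)) = G B := by
      rw [integral_Icc_eq_integral_Ioc, ← intervalIntegral.integral_of_le hB.le, hparts]
    have e2 : (∫ t in Set.Icc (0:ℝ) B, x' t) = G B := by
      rw [integral_Icc_eq_integral_Ioc, ← intervalIntegral.integral_of_le hB.le]
    rw [e1, e2, sub_self]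
  have hInt1 : IntegrableOn (fun t => f t * g1 t) (Set.Icc (0:ℝ) B) volume := by
    refine (bddInt (fun t => f' t * t) (fun t => -(f' t * G t))
      (hf'cont.mul continuous_id) ((hf'cont.mul hGcont).neg)).congr_fun
      (fun t ht => ?_) measurableSet_Icc
    simp only [hg1_def]
    rw [← hf'eq t ht]
    ring
  have key : (∫ t in Set.Icc (0:ℝ) B, f t * g2 t)
      = ∫ t in Set.Icc (0:ℝ) B, (f t * g1 t + d t) := by
    refine setIntegral_congr_fun measurableSet_Icc (fun t ht => ?_)
    simp only [hg1_def, hg2_def, hd_def]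
    rw [← hf'eq t ht]
    field_simp [(hf'pos t).ne']
    ring
  rw [key, integral_add hInt1 hd_int, hd0, add_zero]
end

section
/- Myerson's optimal auction for i.i.d. regular bidders: let F be a regular valuation distribution on [0,B] whose virtual value function φ is continuous and strictly increasing, let p* ∈ [0,B] be the unique zero of φ, and let X_1,…,X_n be i.i.d. with CDF F. Then the expected revenue of the Vickrey (second-price) auction with anonymous reserve p* equals E[max(0, max_i φ(X_i))], the optimal expected revenue. -/
open MeasureTheory ProbabilityTheory
open Set
open scoped NNReal ENNReal

open Classical in
/-- The revenue of the Vickrey auction with bidder-specific reserves `r` on the value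
profile `x`: among bidders clearing their reserves (if any), the winner is the highest
(ties broken by least index) and pays the larger of its reserve and the highest
competing bid that cleared its reserve (`0` if there is none).  With a constant reserve
this is the Vickrey auction with an anonymous reserve. -/
noncomputable def vickreyRevenue {n : ℕ} (r x : Fin n → ℝ) : ℝ :=
  let S := Finset.univ.filter (fun i : Fin n => r i ≤ x i)
  if hS : S.Nonempty then
    let winner := (S.filter (fun i => ∀ j ∈ S, x j ≤ x i)).min' (by
      obtain ⟨i, hi, hmax⟩ := Finset.exists_max_image S x hS
      exact ⟨i, Finset.mem_filter.mpr ⟨hi, hmax⟩⟩)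
    max (r winner)
      (if h2 : (S.erase winner).Nonempty then (S.erase winner).sup' h2 x else 0)
  else 0

/-- threshold for bidder `i` -/
noncomputable def myThr {n : ℕ} (p B : ℝ) (i : Fin n) (x : Fin n → ℝ) : ℝ :=
  min B ((Finset.univ.erase i).fold max p x)

lemma myThr_nonneg {n : ℕ} {p B : ℝ} (hp : 0 ≤ p) (hB : 0 ≤ B) (i : Fin n) (x : Fin n → ℝ) :
    0 ≤ myThr p B i x :=
  le_min hB ((Finset.le_fold_max _).2 (Or.inl hp))

lemma myThr_le {n : ℕ} {p B : ℝ} (i : Fin n) (x : Fin n → ℝ) : myThr p B i x ≤ B :=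
  min_le_left _ _

lemma myerson_exists_argmax {n : ℕ} (hn : 0 < n) (x : Fin n → ℝ)
    (hinj : Function.Injective x) :
    ∃ i₀ : Fin n, ∀ j, j ≠ i₀ → x j < x i₀ := by
  haveI : Nonempty (Fin n) := ⟨⟨0, hn⟩⟩
  obtain ⟨i₀, -, hmax⟩ := Finset.exists_max_image Finset.univ x Finset.univ_nonempty
  exact ⟨i₀, fun j hj => lt_of_le_of_ne (hmax j (Finset.mem_univ j))
    (fun h => hj (hinj h))⟩

/-- Pointwise identity: Vickrey revenue equals sum of threshold payments. -/
lemma myerson_vickrey_eq_sum {n : ℕ} (hn : 0 < n) {p B : ℝ} (hp : 0 ≤ p) (hpB : p ≤ B)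
    (x : Fin n → ℝ) (hx : ∀ i, x i ∈ Set.Icc (0:ℝ) B)
    (hinj : Function.Injective x) (hne : ∀ i, x i ≠ p) :
    vickreyRevenue (fun _ => p) x
      = ∑ i, (if myThr p B i x < x i then myThr p B i x else 0) := by
  classical
  obtain ⟨i₀, hi₀⟩ := myerson_exists_argmax hn x hinj
  set S := Finset.univ.filter (fun i : Fin n => p ≤ x i) with hS
  by_cases hmax : x i₀ < p
  · -- nobody clears the reserve
    have hSe : ¬ S.Nonempty := by
      rintro ⟨k, hk⟩
      have := (Finset.mem_filter.1 hk).2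
      rcases eq_or_ne k i₀ with rfl | hki
      · linarith
      · have := hi₀ k hki; linarith
    have h1 : vickreyRevenue (fun _ => p) x = 0 := by
      rw [vickreyRevenue]; simp only []
      rw [dif_neg hSe]
    rw [h1, Finset.sum_eq_zero]
    intro i _
    rw [if_neg]
    push_neg
    refine le_min (hx i).2 ((Finset.le_fold_max _).2 (Or.inl ?_))
    rcases eq_or_ne i i₀ with rfl | hii
    · exact hmax.le
    · exact le_of_lt (lt_of_lt_of_le (hi₀ i hii) (le_of_lt hmax))
  · push_neg at hmax
    have hpi₀ : p < x i₀ := lt_of_le_of_ne hmax (Ne.symm (hne i₀))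
    have hi₀S : i₀ ∈ S := Finset.mem_filter.2 ⟨Finset.mem_univ _, hpi₀.le⟩
    have hSne : S.Nonempty := ⟨i₀, hi₀S⟩
    -- the winner filter is {i₀}
    have hwin : S.filter (fun i => ∀ j ∈ S, x j ≤ x i) = {i₀} := by
      apply Finset.eq_singleton_iff_unique_mem.2
      constructor
      · exact Finset.mem_filter.2 ⟨hi₀S, fun j _ => by
          rcases eq_or_ne j i₀ with rfl | hj
          · exact le_rfl
          · exact (hi₀ j hj).le⟩
      · intro k hk
        obtain ⟨hkS, hkmax⟩ := Finset.mem_filter.1 hk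
        by_contra hki
        exact absurd (hkmax i₀ hi₀S) (not_le.2 (hi₀ k hki))
    have hmin : ∀ (h : (S.filter (fun i => ∀ j ∈ S, x j ≤ x i)).Nonempty),
        (S.filter (fun i => ∀ j ∈ S, x j ≤ x i)).min' h = i₀ := by
      intro h
      apply le_antisymm
      · exact Finset.min'_le _ _ (by rw [hwin]; exact Finset.mem_singleton_self i₀)
      · exact Finset.le_min' _ _ _ (fun y hy => by
          rw [hwin, Finset.mem_singleton] at hy; rw [hy])
    have hrev : vickreyRevenue (fun _ => p) x
        = max p (if h2 : (S.erase i₀).Nonempty then (S.erase i₀).sup' h2 x else 0) := by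
      dsimp only [vickreyRevenue]
      rw [dif_pos hSne]
      simp only [← hS, hmin]
    -- show the payment equals the threshold of i₀
    have hfold₀ : (Finset.univ.erase i₀).fold max p x < x i₀ :=
      (Finset.fold_max_lt _).2 ⟨hpi₀, fun j hj => hi₀ j (Finset.mem_erase.1 hj).1⟩
    have hpay : max p (if h2 : (S.erase i₀).Nonempty then (S.erase i₀).sup' h2 x else 0)
        = myThr p B i₀ x := by
      apply le_antisymm
      · apply le_min
        · apply max_le hpB
          split_ifs with h2
          · exact Finset.sup'_le _ _ fun j hj => (hx j).2
          · linarith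
        · apply max_le ((Finset.le_fold_max _).2 (Or.inl le_rfl))
          split_ifs with h2
          · apply Finset.sup'_le _ _ fun j hj => ?_
            have hjS := Finset.mem_erase.1 hj
            exact (Finset.le_fold_max _).2 (Or.inr ⟨j,
              Finset.mem_erase.2 ⟨hjS.1, Finset.mem_univ _⟩, le_rfl⟩)
          · exact (Finset.le_fold_max _).2 (Or.inl hp)
      · refine le_trans (min_le_right _ _) ?_
        apply (Finset.fold_max_le _).2 ⟨le_max_left _ _, fun j hj => ?_⟩
        have hji₀ : j ≠ i₀ := (Finset.mem_erase.1 hj).1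
        by_cases hjp : p ≤ x j
        · have hjS : j ∈ S.erase i₀ :=
            Finset.mem_erase.2 ⟨hji₀, Finset.mem_filter.2 ⟨Finset.mem_univ _, hjp⟩⟩
          rw [dif_pos ⟨j, hjS⟩]
          exact le_max_of_le_right (Finset.le_sup' x hjS)
        · push_neg at hjp
          exact le_max_of_le_left hjp.le
    rw [hrev, hpay]
    rw [Finset.sum_eq_single i₀]
    · rw [if_pos (lt_of_le_of_lt (min_le_right B _) hfold₀ : myThr p B i₀ x < x i₀)]
    · intro k _ hk
      rw [if_neg]
      push_neg
      refine le_min (hx k).2 ((Finset.le_fold_max _).2 (Or.inr ⟨i₀,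
        Finset.mem_erase.2 ⟨(Ne.symm hk), Finset.mem_univ _⟩, (hi₀ k hk).le⟩))
    · intro h; exact absurd (Finset.mem_univ i₀) h

/-- Pointwise identity: sum of virtual values of winners equals the positive part of max. -/
lemma myerson_sum_eq_max {n : ℕ} (hn : 0 < n) {p B : ℝ} (hp : 0 ≤ p) (hpB : p ≤ B)
    (φ : ℝ → ℝ) (hφ : StrictMonoOn φ (Set.Icc 0 B)) (hφp : φ p = 0)
    (x : Fin n → ℝ) (hx : ∀ i, x i ∈ Set.Icc (0:ℝ) B)
    (hinj : Function.Injective x) (hne : ∀ i, x i ≠ p) :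
    ∑ i, (if myThr p B i x < x i then φ (x i) else 0)
      = max 0 (Finset.univ.sup' ⟨⟨0, hn⟩, Finset.mem_univ _⟩ (fun i => φ (x i))) := by
  classical
  obtain ⟨i₀, hi₀⟩ := myerson_exists_argmax hn x hinj
  have hpmem : p ∈ Set.Icc (0:ℝ) B := ⟨hp, hpB⟩
  by_cases hmax : x i₀ < p
  · rw [Finset.sum_eq_zero, eq_comm, max_eq_left]
    · apply le_of_lt
      refine (Finset.sup'_lt_iff _).2 ?_
      intro i _
      rw [← hφp]
      have : x i < p := by
        rcases eq_or_ne i i₀ with rfl | hii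
        · exact hmax
        · exact lt_trans (hi₀ i hii) hmax
      exact hφ (hx i) hpmem this
    · intro i _
      rw [if_neg]
      push_neg
      refine le_min (hx i).2 ((Finset.le_fold_max _).2 (Or.inl ?_))
      rcases eq_or_ne i i₀ with rfl | hii
      · exact hmax.le
      · exact le_of_lt (lt_of_lt_of_le (hi₀ i hii) hmax.le)
  · push_neg at hmax
    have hpi₀ : p < x i₀ := lt_of_le_of_ne hmax (Ne.symm (hne i₀))
    have hfold₀ : myThr p B i₀ x < x i₀ :=
      lt_of_le_of_lt (min_le_right _ _)
        ((Finset.fold_max_lt _).2 ⟨hpi₀, fun j hj => hi₀ j (Finset.mem_erase.1 hj).1⟩)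
    have hφpos : 0 < φ (x i₀) := by rw [← hφp]; exact hφ hpmem (hx i₀) hpi₀
    have hsup : Finset.univ.sup' ⟨⟨0, hn⟩, Finset.mem_univ _⟩ (fun i => φ (x i))
        = φ (x i₀) := by
      apply le_antisymm
      · apply Finset.sup'_le
        intro j _
        rcases eq_or_ne j i₀ with rfl | hj
        · exact le_rfl
        · exact (hφ (hx j) (hx i₀) (hi₀ j hj)).le
      · exact Finset.le_sup' (fun i => φ (x i)) (Finset.mem_univ i₀)
    rw [hsup, max_eq_right hφpos.le, Finset.sum_eq_single i₀]
    · rw [if_pos hfold₀]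
    · intro k _ hk
      rw [if_neg]
      push_neg
      refine le_min (hx k).2 ((Finset.le_fold_max _).2 (Or.inr ⟨i₀,
        Finset.mem_erase.2 ⟨(Ne.symm hk), Finset.mem_univ _⟩, (hi₀ k hk).le⟩))
    · intro h; exact absurd (Finset.mem_univ i₀) h

noncomputable def myClip (B y : ℝ) : ℝ := max 0 (min y B)

lemma myClip_mem {B : ℝ} (hB : 0 ≤ B) (y : ℝ) : myClip B y ∈ Set.Icc 0 B :=
  ⟨le_max_left _ _, max_le (by linarith) (min_le_right _ _)⟩

lemma myClip_eq {B y : ℝ} (hy : y ∈ Set.Icc 0 B) : myClip B y = y := by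
  rw [myClip, min_eq_left hy.2, max_eq_right hy.1]

lemma continuous_myClip (B : ℝ) : Continuous (myClip B) :=
  continuous_const.max ((continuous_id.min continuous_const))

section OneDim

variable {B : ℝ} {F f : ℝ → ℝ}

lemma myerson_F_mono (hB : 0 < B)
    (hderiv : ∀ x ∈ Set.Icc 0 B, HasDerivAt F (f x) x)
    (hfpos : ∀ x ∈ Set.Icc 0 B, 0 < f x) :
    StrictMonoOn F (Set.Icc 0 B) := by
  apply strictMonoOn_of_deriv_pos (convex_Icc 0 B)
  · exact fun x hx => (hderiv x hx).continuousAt.continuousWithinAt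
  · intro x hx
    rw [interior_Icc] at hx
    have hx' : x ∈ Set.Icc 0 B := ⟨hx.1.le, hx.2.le⟩
    rw [(hderiv x hx').deriv]
    exact hfpos x hx'

lemma myerson_FTC (hB : 0 < B)
    (hderiv : ∀ x ∈ Set.Icc 0 B, HasDerivAt F (f x) x)
    (hfcont : ContinuousOn f (Set.Icc 0 B))
    {a b : ℝ} (ha : a ∈ Set.Icc 0 B) (hb : b ∈ Set.Icc 0 B) (hab : a ≤ b) :
    ∫ y in a..b, f y = F b - F a := by
  have hsub : Set.uIcc a b ⊆ Set.Icc 0 B := by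
    rw [Set.uIcc_of_le hab]
    exact Set.Icc_subset_Icc ha.1 hb.2
  exact intervalIntegral.integral_eq_sub_of_hasDerivAt
    (fun y hy => hderiv y (hsub hy))
    ((hfcont.mono hsub).intervalIntegrable)

/-- The law is the density measure of `f` on `(0,B]`. -/
lemma myerson_nu_eq (hB : 0 < B)
    (hderiv : ∀ x ∈ Set.Icc 0 B, HasDerivAt F (f x) x)
    (hfcont : ContinuousOn f (Set.Icc 0 B))
    (hfpos : ∀ x ∈ Set.Icc 0 B, 0 < f x)
    (hF0 : F 0 = 0) (hFB : F B = 1)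
    (ν : Measure ℝ) [IsProbabilityMeasure ν]
    (hIic : ∀ x ∈ Set.Icc 0 B, ν (Set.Iic x) = ENNReal.ofReal (F x)) :
    ν = (volume.restrict (Set.Ioc 0 B)).withDensity
        (fun y => (Real.toNNReal (f (myClip B y)) : ℝ≥0∞)) := by
  have hfc : Continuous (fun y => f (myClip B y)) :=
    hfcont.comp_continuous (continuous_myClip B) (fun y => myClip_mem hB.le y)
  have hfcnn : ∀ y, 0 ≤ f (myClip B y) := fun y => (hfpos _ (myClip_mem hB.le y)).le
  have hint : ∀ a ∈ Set.Icc 0 B,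
      ∫⁻ y in Set.Ioc 0 a, (Real.toNNReal (f (myClip B y)) : ℝ≥0∞) ∂volume
        = ENNReal.ofReal (F a) := by
    intro a ha
    have h1 : ∫⁻ y in Set.Ioc 0 a, (Real.toNNReal (f (myClip B y)) : ℝ≥0∞) ∂volume
        = ∫⁻ y in Set.Ioc 0 a, ENNReal.ofReal (f (myClip B y)) ∂volume := rfl
    rw [h1, ← ofReal_integral_eq_lintegral_ofReal
      (hfc.integrableOn_Ioc) (Filter.Eventually.of_forall hfcnn)]
    congr 1
    have h2 : ∫ y in Set.Ioc 0 a, f (myClip B y) = ∫ y in Set.Ioc 0 a, f y := by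
      apply setIntegral_congr_fun measurableSet_Ioc
      intro y hy
      dsimp only
      rw [myClip_eq ⟨hy.1.le, le_trans hy.2 ha.2⟩]
    rw [h2, ← intervalIntegral.integral_of_le ha.1,
      myerson_FTC hB hderiv hfcont ⟨le_rfl, hB.le⟩ ha ha.1, hF0, sub_zero]
  apply MeasureTheory.Measure.ext_of_Iic
  intro a
  rw [withDensity_apply _ measurableSet_Iic, Measure.restrict_restrict measurableSet_Iic]
  rcases le_or_gt a 0 with h | h
  · have he : Set.Iic a ∩ Set.Ioc 0 B = ∅ := by
      ext z; simp only [Set.mem_inter_iff, Set.mem_Iic, Set.mem_Ioc, Set.mem_empty_iff_false,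
        iff_false, not_and]
      intro hz h0 _; linarith
    rw [he]
    simp only [Measure.restrict_empty, lintegral_zero_measure]
    refine le_antisymm ?_ zero_le
    calc ν (Set.Iic a) ≤ ν (Set.Iic 0) := measure_mono (Set.Iic_subset_Iic.2 h)
      _ = 0 := by rw [hIic 0 ⟨le_rfl, hB.le⟩, hF0, ENNReal.ofReal_zero]
  · rcases le_or_gt a B with h2 | h2
    · have he : Set.Iic a ∩ Set.Ioc 0 B = Set.Ioc 0 a := by
        ext z
        simp only [Set.mem_inter_iff, Set.mem_Iic, Set.mem_Ioc]
        exact ⟨fun ⟨hz, h0, _⟩ => ⟨h0, hz⟩, fun ⟨h0, hz⟩ => ⟨hz, h0, le_trans hz h2⟩⟩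
      rw [he, hint a ⟨h.le, h2⟩, hIic a ⟨h.le, h2⟩]
    · have he : Set.Iic a ∩ Set.Ioc 0 B = Set.Ioc 0 B := by
        ext z
        simp only [Set.mem_inter_iff, Set.mem_Iic, Set.mem_Ioc]
        exact ⟨fun ⟨hz, h0, hB'⟩ => ⟨h0, hB'⟩, fun ⟨h0, hB'⟩ => ⟨le_trans hB' h2.le, h0, hB'⟩⟩
      rw [he, hint B ⟨hB.le, le_rfl⟩, hFB, ENNReal.ofReal_one]
      refine le_antisymm prob_le_one ?_
      calc (1 : ℝ≥0∞) = ENNReal.ofReal (F B) := by rw [hFB, ENNReal.ofReal_one]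
        _ = ν (Set.Iic B) := (hIic B ⟨hB.le, le_rfl⟩).symm
        _ ≤ ν (Set.Iic a) := measure_mono (Set.Iic_subset_Iic.2 h2.le)

lemma myerson_nu_singleton (hB : 0 < B)
    (hderiv : ∀ x ∈ Set.Icc 0 B, HasDerivAt F (f x) x)
    (hfcont : ContinuousOn f (Set.Icc 0 B))
    (hfpos : ∀ x ∈ Set.Icc 0 B, 0 < f x)
    (hF0 : F 0 = 0) (hFB : F B = 1)
    (ν : Measure ℝ) [IsProbabilityMeasure ν]
    (hIic : ∀ x ∈ Set.Icc 0 B, ν (Set.Iic x) = ENNReal.ofReal (F x)) (a : ℝ) :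
    ν {a} = 0 := by
  rw [myerson_nu_eq hB hderiv hfcont hfpos hF0 hFB ν hIic]
  exact withDensity_absolutelyContinuous _ _
    (le_antisymm (le_trans (Measure.restrict_apply_le _ _) (by simp)) zero_le)

lemma myerson_F_bounds (hB : 0 < B)
    (hderiv : ∀ x ∈ Set.Icc 0 B, HasDerivAt F (f x) x)
    (hfpos : ∀ x ∈ Set.Icc 0 B, 0 < f x)
    (hF0 : F 0 = 0) (hFB : F B = 1) {t : ℝ} (ht : t ∈ Set.Icc 0 B) :
    0 ≤ F t ∧ F t ≤ 1 := by
  have hm := (myerson_F_mono hB hderiv hfpos).monotoneOn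
  constructor
  · rw [← hF0]; exact hm ⟨le_rfl, hB.le⟩ ht ht.1
  · rw [← hFB]; exact hm ht ⟨hB.le, le_rfl⟩ ht.2

/-- expected payment at threshold `t`. -/
lemma myerson_K2 (hB : 0 < B)
    (hderiv : ∀ x ∈ Set.Icc 0 B, HasDerivAt F (f x) x)
    (hfpos : ∀ x ∈ Set.Icc 0 B, 0 < f x)
    (hF0 : F 0 = 0) (hFB : F B = 1)
    (ν : Measure ℝ) [IsProbabilityMeasure ν]
    (hIic : ∀ x ∈ Set.Icc 0 B, ν (Set.Iic x) = ENNReal.ofReal (F x))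
    {t : ℝ} (ht : t ∈ Set.Icc 0 B) :
    ∫ z, (if t < z then t else 0) ∂ν = t * (1 - F t) := by
  obtain ⟨hF0t, hFt1⟩ := myerson_F_bounds hB hderiv hfpos hF0 hFB ht
  have hIoi : ν (Set.Ioi t) = ENNReal.ofReal (1 - F t) := by
    rw [← Set.compl_Iic, measure_compl measurableSet_Iic (measure_ne_top ν _),
      measure_univ, hIic t ht, ← ENNReal.ofReal_one, ← ENNReal.ofReal_sub _ hF0t]
  have h1 : (fun z => if t < z then t else 0)
      = Set.indicator (Set.Ioi t) (fun _ => t) := by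
    funext z
    by_cases hz : t < z
    · rw [if_pos hz, Set.indicator_of_mem (Set.mem_Ioi.2 hz)]
    · rw [if_neg hz, Set.indicator_of_notMem (fun hc => hz (Set.mem_Ioi.1 hc))]
  rw [h1, integral_indicator_const _ measurableSet_Ioi, measureReal_def, hIoi,
    ENNReal.toReal_ofReal (by linarith), smul_eq_mul, mul_comm]

/-- expected virtual value above threshold `t`. -/
lemma myerson_K3 (hB : 0 < B)
    (hderiv : ∀ x ∈ Set.Icc 0 B, HasDerivAt F (f x) x)
    (hfcont : ContinuousOn f (Set.Icc 0 B))
    (hfpos : ∀ x ∈ Set.Icc 0 B, 0 < f x)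
    (hF0 : F 0 = 0) (hFB : F B = 1)
    (hφcont : ContinuousOn (fun x => x - (1 - F x) / f x) (Set.Icc 0 B))
    (ν : Measure ℝ) [IsProbabilityMeasure ν]
    (hIic : ∀ x ∈ Set.Icc 0 B, ν (Set.Iic x) = ENNReal.ofReal (F x))
    {t : ℝ} (ht : t ∈ Set.Icc 0 B) :
    ∫ z, (if t < z then (myClip B z - (1 - F (myClip B z)) / f (myClip B z)) else 0) ∂ν
      = t * (1 - F t) := by
  have hfc : Continuous (fun y => f (myClip B y)) :=
    hfcont.comp_continuous (continuous_myClip B) (fun y => myClip_mem hB.le y)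
  rw [myerson_nu_eq hB hderiv hfcont hfpos hF0 hFB ν hIic,
    integral_withDensity_eq_integral_smul (hfc.measurable.real_toNNReal) _]
  have h2 : ∫ y in Set.Ioc 0 B, Real.toNNReal (f (myClip B y)) •
        (if t < y then (myClip B y - (1 - F (myClip B y)) / f (myClip B y)) else 0)
      = ∫ y in Set.Ioc 0 B,
        Set.indicator (Set.Ioi t) (fun z => (z - (1 - F z) / f z) * f z) y := by
    apply setIntegral_congr_fun measurableSet_Ioc
    intro y hy
    have hymem : y ∈ Set.Icc 0 B := ⟨hy.1.le, hy.2⟩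
    have hcy : myClip B y = y := myClip_eq hymem
    dsimp only
    rw [hcy, NNReal.smul_def, Real.coe_toNNReal _ (hfpos y hymem).le, smul_eq_mul]
    by_cases hz : t < y
    · rw [if_pos hz, Set.indicator_of_mem (Set.mem_Ioi.2 hz), mul_comm]
    · rw [if_neg hz, Set.indicator_of_notMem (fun hc => hz (Set.mem_Ioi.1 hc)), mul_zero]
  rw [h2, setIntegral_indicator measurableSet_Ioi]
  have h3 : Set.Ioc 0 B ∩ Set.Ioi t = Set.Ioc t B := by
    ext z
    simp only [Set.mem_inter_iff, Set.mem_Ioc, Set.mem_Ioi]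
    exact ⟨fun ⟨⟨_, hzB⟩, hzt⟩ => ⟨hzt, hzB⟩,
      fun ⟨hzt, hzB⟩ => ⟨⟨lt_of_le_of_lt ht.1 hzt, hzB⟩, hzt⟩⟩
  rw [h3, ← intervalIntegral.integral_of_le ht.2]
  have hsub : Set.uIcc t B ⊆ Set.Icc 0 B := by
    rw [Set.uIcc_of_le ht.2]
    exact Set.Icc_subset_Icc ht.1 le_rfl
  have hFTC : ∫ y in t..B, (y - (1 - F y) / f y) * f y
      = B * (F B - 1) - t * (F t - 1) := by
    apply intervalIntegral.integral_eq_sub_of_hasDerivAt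
    · intro y hy
      have hymem := hsub hy
      have h4 : HasDerivAt (fun y => y * (F y - 1)) (1 * (F y - 1) + y * f y) y :=
        (hasDerivAt_id y).mul ((hderiv y hymem).sub_const 1)
      refine h4.congr_deriv ?_
      have hfy := (hfpos y hymem).ne'
      rw [sub_mul, div_mul_cancel₀ _ hfy]
      ring
    · exact ((hφcont.mul hfcont).mono hsub).intervalIntegrable
  rw [hFTC, hFB]
  ring
open scoped NNReal ENNReal

section Helpers

lemma continuous_fold_max {ι : Type*} (s : Finset ι) (c : ℝ) :
    Continuous (fun y : ι → ℝ => s.fold max c y) := by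
  induction s using Finset.cons_induction with
  | empty => simpa using continuous_const
  | cons a s ha ih =>
      simp only [Finset.fold_cons]
      exact (continuous_apply a).max ih

lemma myerson_fold_subtype {n : ℕ} (s : Finset (Fin n)) (b : ℝ) (x : Fin n → ℝ) :
    (Finset.univ.fold max b (fun j : {j // j ∈ s} => x j.1)) = s.fold max b x := by
  rw [Finset.univ_eq_attach,
    show s.fold max b x = ((s.attach.map (Function.Embedding.subtype _)).fold max b x) from by
      rw [Finset.attach_map_val],
    Finset.fold_map]
  rfl

end Helpers
/-- **Myerson's optimal auction for i.i.d. regular bidders.**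
Let `F` be a regular valuation distribution on `[0,B]` whose virtual value function
`φ x = x − (1 − F x)/f x` is continuous and strictly increasing on `[0,B]`, let `p*`
be the unique zero of `φ`, and let `X 0, …, X (n-1)` be i.i.d. with CDF `F`.  Then the
expected revenue of the Vickrey auction with anonymous reserve `p*` equals
`E[max(0, max_i φ(X i))]`, the optimal expected revenue. -/
theorem myerson_iid_vickrey_monopoly_reserve_optimal
    (n : ℕ) (hn : 1 ≤ n)
    (B : ℝ) (hB : 0 < B) (F f : ℝ → ℝ)
    (hderiv : ∀ x ∈ Set.Icc 0 B, HasDerivAt F (f x) x)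
    (hfcont : ContinuousOn f (Set.Icc 0 B))
    (hfpos : ∀ x ∈ Set.Icc 0 B, 0 < f x)
    (hF0 : F 0 = 0) (hFB : F B = 1)
    (hφcont : ContinuousOn (fun x => x - (1 - F x) / f x) (Set.Icc 0 B))
    (hφstrict : StrictMonoOn (fun x => x - (1 - F x) / f x) (Set.Icc 0 B))
    (pstar : ℝ) (hpstar : pstar ∈ Set.Icc 0 B)
    (hzero : pstar - (1 - F pstar) / f pstar = 0)
    {Ω : Type*} [MeasurableSpace Ω] (μ : Measure Ω) [IsProbabilityMeasure μ]
    (X : Fin n → Ω → ℝ) (hX : ∀ i, Measurable (X i))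
    (hindep : iIndepFun X μ)
    (hsupp : ∀ i ω, X i ω ∈ Set.Icc 0 B)
    (hcdf : ∀ i, ∀ x ∈ Set.Icc 0 B, (μ {ω | X i ω ≤ x}).toReal = F x) :
    ∫ ω, vickreyRevenue (fun _ => pstar) (fun i => X i ω) ∂μ
      = ∫ ω, max 0 (Finset.univ.sup' ⟨⟨0, hn⟩, Finset.mem_univ _⟩
          (fun i => X i ω - (1 - F (X i ω)) / f (X i ω))) ∂μ := by
  classical
  have hn' : 0 < n := hn
  have hp0 : 0 ≤ pstar := hpstar.1
  have hpB : pstar ≤ B := hpstar.2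
  -- the clipped virtual value function
  set φc : ℝ → ℝ := fun z => myClip B z - (1 - F (myClip B z)) / f (myClip B z) with hφcdef
  have hφccont : Continuous φc :=
    hφcont.comp_continuous (continuous_myClip B) (fun y => myClip_mem hB.le y)
  obtain ⟨C, hC⟩ := isCompact_Icc.exists_bound_of_continuousOn hφcont
  have hC0 : 0 ≤ C := le_trans (norm_nonneg _) (hC 0 ⟨le_rfl, hB.le⟩)
  have hCφc : ∀ z, ‖φc z‖ ≤ C := fun z => hC _ (myClip_mem hB.le z)
  have hφcs : StrictMonoOn φc (Set.Icc 0 B) := by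
    intro a ha b hb hab
    simp only [hφcdef, myClip_eq ha, myClip_eq hb]
    exact hφstrict ha hb hab
  have hφcp : φc pstar = 0 := by
    simp only [hφcdef, myClip_eq hpstar]
    exact hzero
  -- the laws of the individual bids
  set ν : Fin n → Measure ℝ := fun i => μ.map (X i) with hνdef
  haveI : ∀ i, IsProbabilityMeasure (ν i) :=
    fun i => Measure.isProbabilityMeasure_map (hX i).aemeasurable
  have hIic : ∀ i, ∀ x ∈ Set.Icc 0 B, ν i (Set.Iic x) = ENNReal.ofReal (F x) := by
    intro i x hx
    rw [hνdef]
    rw [Measure.map_apply (hX i) measurableSet_Iic,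
      show X i ⁻¹' (Set.Iic x) = {ω | X i ω ≤ x} from rfl,
      ← hcdf i x hx, ENNReal.ofReal_toReal (measure_ne_top μ _)]
  have hsingle : ∀ i a, ν i {a} = 0 := fun i a =>
    myerson_nu_singleton hB hderiv hfcont hfpos hF0 hFB (ν i) (hIic i) a
  -- a.e. genericity
  have hne_p : ∀ i : Fin n, ∀ᵐ ω ∂μ, X i ω ≠ pstar := by
    intro i
    rw [ae_iff]
    have h1 : {ω | ¬ X i ω ≠ pstar} = X i ⁻¹' {pstar} := by ext ω; simp
    rw [h1, ← Measure.map_apply (hX i) (measurableSet_singleton _)]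
    exact hsingle i pstar
  have hne_pair : ∀ i j : Fin n, i ≠ j → ∀ᵐ ω ∂μ, X i ω ≠ X j ω := by
    intro i j hij
    have hmap : μ.map (fun ω => (X i ω, X j ω)) = (ν i).prod (ν j) :=
      (indepFun_iff_map_prod_eq_prod_map_map (hX i).aemeasurable (hX j).aemeasurable).1
        (hindep.indepFun hij)
    rw [ae_iff]
    have h1 : {ω | ¬ X i ω ≠ X j ω}
        = (fun ω => (X i ω, X j ω)) ⁻¹' {p : ℝ × ℝ | p.1 = p.2} := by ext ω; simp
    have hD : MeasurableSet {p : ℝ × ℝ | p.1 = p.2} :=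
      measurableSet_eq_fun measurable_fst measurable_snd
    rw [h1, ← Measure.map_apply ((hX i).prodMk (hX j)) hD, hmap,
      Measure.prod_apply hD]
    have h2 : ∀ z : ℝ, (Prod.mk z ⁻¹' {p : ℝ × ℝ | p.1 = p.2}) = {z} := by
      intro z; ext y; simp [eq_comm]
    simp only [h2, hsingle j]
    simp
  have hae : ∀ᵐ ω ∂μ, Function.Injective (fun i => X i ω) ∧ ∀ i, X i ω ≠ pstar := by
    have h1 : ∀ᵐ ω ∂μ, ∀ i, X i ω ≠ pstar := (ae_all_iff).2 hne_p
    have h2 : ∀ᵐ ω ∂μ, ∀ i j : Fin n, i ≠ j → X i ω ≠ X j ω := by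
      rw [ae_all_iff]
      intro i
      rw [ae_all_iff]
      intro j
      by_cases hij : i = j
      · subst hij; filter_upwards with ω h; exact absurd rfl h
      · filter_upwards [hne_pair i j hij] with ω h _; exact h
    filter_upwards [h1, h2] with ω hω1 hω2
    refine ⟨fun a b hab => ?_, hω1⟩
    by_contra hne'
    exact hω2 a b hne' hab
  -- measurability and integrability of the payment summands
  have hThrMeas : ∀ i : Fin n, Measurable (fun ω => myThr pstar B i (fun j => X j ω)) := by
    intro i
    have h1 : Continuous (fun x : Fin n → ℝ => myThr pstar B i x) := by
      unfold myThr
      exact continuous_const.min (continuous_fold_max _ _)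
    exact h1.measurable.comp (measurable_pi_lambda _ fun j => hX j)
  have hint₁ : ∀ i : Fin n, Integrable (fun ω =>
      if myThr pstar B i (fun j => X j ω) < X i ω
      then myThr pstar B i (fun j => X j ω) else 0) μ := by
    intro i
    refine Integrable.mono' (integrable_const B)
      ((Measurable.ite (measurableSet_lt (hThrMeas i) (hX i)) (hThrMeas i)
        measurable_const)).aestronglyMeasurable
      (Filter.Eventually.of_forall fun ω => ?_)
    split_ifs
    · rw [Real.norm_eq_abs, abs_of_nonneg (myThr_nonneg hp0 hB.le _ _)]
      exact myThr_le _ _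
    · simpa using hB.le
  have hint₂ : ∀ i : Fin n, Integrable (fun ω =>
      if myThr pstar B i (fun j => X j ω) < X i ω then φc (X i ω) else 0) μ := by
    intro i
    refine Integrable.mono' (integrable_const C)
      ((Measurable.ite (measurableSet_lt (hThrMeas i) (hX i))
        (hφccont.measurable.comp (hX i)) measurable_const)).aestronglyMeasurable
      (Filter.Eventually.of_forall fun ω => ?_)
    split_ifs
    · exact hCφc _
    · simpa using hC0
  -- the key per-bidder identity (Myerson's lemma)
  have key : ∀ i : Fin n,
      (∫ ω, (if myThr pstar B i (fun j => X j ω) < X i ω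
        then myThr pstar B i (fun j => X j ω) else 0) ∂μ)
      = ∫ ω, (if myThr pstar B i (fun j => X j ω) < X i ω then φc (X i ω) else 0) ∂μ := by
    intro i
    set s : Finset (Fin n) := {i}ᶜ with hs
    set T : ({j // j ∈ s} → ℝ) → ℝ :=
      fun y => min B (Finset.univ.fold max pstar y) with hT
    have hTcont : Continuous T := continuous_const.min (continuous_fold_max _ _)
    have hTmem : ∀ y, T y ∈ Set.Icc 0 B := fun y =>
      ⟨le_min hB.le ((Finset.le_fold_max _).2 (Or.inl hp0)), min_le_left _ _⟩
    set k₁ : ℝ × ({j // j ∈ s} → ℝ) → ℝ :=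
      fun q => if T q.2 < q.1 then T q.2 else 0 with hk₁
    set k₂ : ℝ × ({j // j ∈ s} → ℝ) → ℝ :=
      fun q => if T q.2 < q.1 then φc q.1 else 0 with hk₂
    have hmeas_cond : MeasurableSet {q : ℝ × ({j // j ∈ s} → ℝ) | T q.2 < q.1} :=
      measurableSet_lt (hTcont.comp continuous_snd).measurable measurable_fst
    have hk₁m : Measurable k₁ :=
      Measurable.ite hmeas_cond (hTcont.comp continuous_snd).measurable measurable_const
    have hk₂m : Measurable k₂ :=
      Measurable.ite hmeas_cond (hφccont.comp continuous_fst).measurable measurable_const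
    set Rst : Ω → ({j // j ∈ s} → ℝ) := fun ω j => X j.1 ω with hRst
    have hRm : Measurable Rst := measurable_pi_lambda _ (fun j => hX j.1)
    have hpairm : Measurable (fun ω => (X i ω, Rst ω)) := (hX i).prodMk hRm
    have hindep' : IndepFun (X i) Rst μ := by
      have h0 := hindep.indepFun_finset {i} s (by simp [hs]) hX
      have h1 := h0.comp
        (measurable_pi_apply (⟨i, Finset.mem_singleton_self i⟩ : {j // j ∈ ({i} : Finset (Fin n))}))
        (measurable_id : Measurable (id : ({j // j ∈ s} → ℝ) → _))
      exact h1
    have hmapeq : μ.map (fun ω => (X i ω, Rst ω)) = (ν i).prod (μ.map Rst) :=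
      (indepFun_iff_map_prod_eq_prod_map_map (hX i).aemeasurable hRm.aemeasurable).1 hindep'
    haveI : IsProbabilityMeasure (μ.map Rst) := Measure.isProbabilityMeasure_map hRm.aemeasurable
    have hik₁ : Integrable k₁ ((ν i).prod (μ.map Rst)) := by
      refine Integrable.mono' (integrable_const B) hk₁m.aestronglyMeasurable
        (Filter.Eventually.of_forall fun q => ?_)
      simp only [hk₁]
      split_ifs
      · rw [Real.norm_eq_abs, abs_of_nonneg (hTmem _).1]
        exact (hTmem _).2
      · simpa using hB.le
    have hik₂ : Integrable k₂ ((ν i).prod (μ.map Rst)) := by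
      refine Integrable.mono' (integrable_const C) hk₂m.aestronglyMeasurable
        (Filter.Eventually.of_forall fun q => ?_)
      simp only [hk₂]
      split_ifs
      · exact hCφc _
      · simpa using hC0
    have hinner : ∀ y, (∫ z, k₁ (z, y) ∂ν i) = ∫ z, k₂ (z, y) ∂ν i := by
      intro y
      have e1 : (∫ z, k₁ (z, y) ∂ν i) = ∫ z, (if T y < z then T y else 0) ∂ν i := rfl
      have e2 : (∫ z, k₂ (z, y) ∂ν i)
          = ∫ z, (if T y < z then (myClip B z - (1 - F (myClip B z)) / f (myClip B z)) else 0) ∂ν i := rfl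
      rw [e1, e2, myerson_K2 hB hderiv hfpos hF0 hFB (ν i) (hIic i) (hTmem y),
        myerson_K3 hB hderiv hfcont hfpos hF0 hFB hφcont (ν i) (hIic i) (hTmem y)]
    have hfold : ∀ ω, T (Rst ω) = myThr pstar B i (fun j => X j ω) := by
      intro ω
      have h1 : (Finset.univ.fold max pstar (fun j : {j // j ∈ s} => X j.1 ω))
          = s.fold max pstar (fun j => X j ω) :=
        myerson_fold_subtype s pstar (fun j => X j ω)
      have h2 : s = Finset.univ.erase i := by
        rw [hs]; ext j; simp [Finset.mem_erase, eq_comm]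
      simp only [hT, myThr, hRst, h1, h2]
    have hF1 : ∀ ω, k₁ (X i ω, Rst ω)
        = (if myThr pstar B i (fun j => X j ω) < X i ω
          then myThr pstar B i (fun j => X j ω) else 0) := by
      intro ω
      simp only [hk₁, hfold ω]
    have hF2 : ∀ ω, k₂ (X i ω, Rst ω)
        = (if myThr pstar B i (fun j => X j ω) < X i ω then φc (X i ω) else 0) := by
      intro ω
      simp only [hk₂, hfold ω]
    calc (∫ ω, (if myThr pstar B i (fun j => X j ω) < X i ω
            then myThr pstar B i (fun j => X j ω) else 0) ∂μ)
        = ∫ ω, k₁ (X i ω, Rst ω) ∂μ := by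
          exact integral_congr_ae (Filter.Eventually.of_forall fun ω => (hF1 ω).symm)
      _ = ∫ q, k₁ q ∂((ν i).prod (μ.map Rst)) := by
          rw [← hmapeq, integral_map hpairm.aemeasurable hk₁m.aestronglyMeasurable]
      _ = ∫ y, (∫ z, k₁ (z, y) ∂ν i) ∂(μ.map Rst) := integral_prod_symm _ hik₁
      _ = ∫ y, (∫ z, k₂ (z, y) ∂ν i) ∂(μ.map Rst) :=
          integral_congr_ae (Filter.Eventually.of_forall hinner)
      _ = ∫ q, k₂ q ∂((ν i).prod (μ.map Rst)) := (integral_prod_symm _ hik₂).symm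
      _ = ∫ ω, k₂ (X i ω, Rst ω) ∂μ := by
          rw [← hmapeq, integral_map hpairm.aemeasurable hk₂m.aestronglyMeasurable]
      _ = ∫ ω, (if myThr pstar B i (fun j => X j ω) < X i ω then φc (X i ω) else 0) ∂μ :=
          integral_congr_ae (Filter.Eventually.of_forall hF2)
  -- assemble
  calc ∫ ω, vickreyRevenue (fun _ => pstar) (fun i => X i ω) ∂μ
      = ∫ ω, (∑ i, (if myThr pstar B i (fun j => X j ω) < X i ω
          then myThr pstar B i (fun j => X j ω) else 0)) ∂μ := by
        apply integral_congr_ae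
        filter_upwards [hae] with ω hω
        exact myerson_vickrey_eq_sum hn' hp0 hpB _ (fun j => hsupp j ω) hω.1 hω.2
    _ = ∑ i, ∫ ω, (if myThr pstar B i (fun j => X j ω) < X i ω
          then myThr pstar B i (fun j => X j ω) else 0) ∂μ :=
        integral_finset_sum _ (fun i _ => hint₁ i)
    _ = ∑ i, ∫ ω, (if myThr pstar B i (fun j => X j ω) < X i ω
          then φc (X i ω) else 0) ∂μ := Finset.sum_congr rfl (fun i _ => key i)
    _ = ∫ ω, (∑ i, (if myThr pstar B i (fun j => X j ω) < X i ω
          then φc (X i ω) else 0)) ∂μ := (integral_finset_sum _ (fun i _ => hint₂ i)).symm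
    _ = ∫ ω, max 0 (Finset.univ.sup' ⟨⟨0, hn⟩, Finset.mem_univ _⟩
          (fun i => φc (X i ω))) ∂μ := by
        apply integral_congr_ae
        filter_upwards [hae] with ω hω
        exact myerson_sum_eq_max hn' hp0 hpB φc hφcs hφcp _ (fun j => hsupp j ω) hω.1 hω.2
    _ = ∫ ω, max 0 (Finset.univ.sup' ⟨⟨0, hn⟩, Finset.mem_univ _⟩
          (fun i => X i ω - (1 - F (X i ω)) / f (X i ω))) ∂μ := by
        apply integral_congr_ae
        apply Filter.Eventually.of_forall
        intro ω
        dsimp only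
        congr 1
        apply Finset.sup'_congr _ rfl
        intro j _
        simp only [hφcdef, myClip_eq (hsupp j ω)]
end OneDim
end

section
/- Bulow–Klemperer (auctions versus negotiations): let F be a regular valuation distribution on [0,B] with virtual value function φ, let n ≥ 1, and let X_1,…,X_{n+1} be i.i.d. with CDF F. Then the expected revenue of the Vickrey auction with n+1 bidders and no reserve — namely E[second-highest of X_1,…,X_{n+1}] — is at least E[max(0, max_{1 ≤ i ≤ n} φ(X_i))], the optimal expected revenue achievable with only n bidders. -/
open MeasureTheory ProbabilityTheory Set
open scoped ENNReal NNReal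

namespace BKaux


/-- Clamp to `[0,B]`. -/
noncomputable def cl (B x : ℝ) : ℝ := max 0 (min x B)

lemma cl_mem {B : ℝ} (hB : 0 ≤ B) (x : ℝ) : cl B x ∈ Icc 0 B := by
  constructor
  · exact le_max_left _ _
  · simp only [cl, max_le_iff]
    exact ⟨hB, min_le_right _ _⟩

lemma cl_eq {B x : ℝ} (hx : x ∈ Icc 0 B) : cl B x = x := by
  simp only [cl, min_eq_left hx.2, max_eq_right hx.1]

lemma cl_mono {B : ℝ} : Monotone (cl B) := fun x y hxy => by
  exact max_le_max le_rfl (min_le_min hxy le_rfl)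

lemma cl_cont {B : ℝ} : Continuous (cl B) :=
  continuous_const.max (continuous_id.min continuous_const)

/-- Bundle of the hypotheses on the distribution. -/
structure Hyp (B : ℝ) (F f : ℝ → ℝ) : Prop where
  hB : 0 < B
  hderiv : ∀ x ∈ Icc 0 B, HasDerivAt F (f x) x
  hfcont : ContinuousOn f (Icc 0 B)
  hfpos : ∀ x ∈ Icc 0 B, 0 < f x
  hF0 : F 0 = 0
  hFB : F B = 1
  hreg : MonotoneOn (fun x => x - (1 - F x) / f x) (Icc 0 B)

variable {B : ℝ} {F f : ℝ → ℝ}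

/-- Clamped virtual value function. -/
noncomputable def phi (B : ℝ) (F f : ℝ → ℝ) (x : ℝ) : ℝ :=
  cl B x - (1 - F (cl B x)) / f (cl B x)

lemma phi_eq (hx : x ∈ Icc 0 B) : phi B F f x = x - (1 - F x) / f x := by
  simp [phi, cl_eq hx]

lemma Hyp.Fcont (h : Hyp B F f) : ContinuousOn F (Icc 0 B) := fun x hx =>
  ((h.hderiv x hx).continuousAt).continuousWithinAt

lemma Hyp.phi_cont (h : Hyp B F f) : Continuous (phi B F f) := by
  have hcl : Continuous fun x => cl B x := cl_cont
  have hmem : ∀ x, cl B x ∈ Icc 0 B := cl_mem h.hB.le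
  have hF : Continuous fun x => F (cl B x) :=
    h.Fcont.comp_continuous hcl hmem
  have hf : Continuous fun x => f (cl B x) :=
    h.hfcont.comp_continuous hcl hmem
  exact hcl.sub ((continuous_const.sub hF).div hf fun x => (h.hfpos _ (hmem x)).ne')

lemma Hyp.phi_mono (h : Hyp B F f) : Monotone (phi B F f) := fun x y hxy =>
  h.hreg (cl_mem h.hB.le x) (cl_mem h.hB.le y) (cl_mono hxy)

lemma Hyp.phi_bound (h : Hyp B F f) : ∃ C : ℝ, 0 ≤ C ∧ ∀ x, |phi B F f x| ≤ C := by
  obtain ⟨C, hC⟩ := (isCompact_Icc (a := (0:ℝ)) (b := B)).exists_bound_of_continuousOn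
    (fun x hx => ((h.phi_cont).continuousAt).continuousWithinAt)
  refine ⟨max C 0, le_max_right _ _, fun x => ?_⟩
  have h1 : phi B F f x = phi B F f (cl B x) := by
    rw [phi_eq (cl_mem h.hB.le x), phi]
  rw [h1]
  calc |phi B F f (cl B x)| ≤ C := by
        have := hC (cl B x) (cl_mem h.hB.le x)
        simpa [Real.norm_eq_abs] using this
    _ ≤ max C 0 := le_max_left _ _

/-- FTC for `F`. -/
lemma Hyp.FTC (h : Hyp B F f) {a b : ℝ} (ha : a ∈ Icc 0 B) (hb : b ∈ Icc 0 B) (hab : a ≤ b) :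
    ∫ x in a..b, f x = F b - F a := by
  have hsub : uIcc a b ⊆ Icc 0 B := by
    rw [uIcc_of_le hab]
    exact Icc_subset_Icc ha.1 hb.2
  exact intervalIntegral.integral_eq_sub_of_hasDerivAt
    (fun x hx => h.hderiv x (hsub hx))
    ((h.hfcont.mono hsub).intervalIntegrable)

lemma Hyp.Fmono (h : Hyp B F f) : MonotoneOn F (Icc 0 B) := by
  intro a ha b hb hab
  have := h.FTC ha hb hab
  have h2 : 0 ≤ ∫ x in a..b, f x := by
    apply intervalIntegral.integral_nonneg hab
    intro x hx
    exact (h.hfpos x ⟨le_trans ha.1 hx.1, le_trans hx.2 hb.2⟩).le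
  linarith

lemma Hyp.F_mem (h : Hyp B F f) {x : ℝ} (hx : x ∈ Icc 0 B) : F x ∈ Icc (0:ℝ) 1 := by
  constructor
  · have := h.Fmono (left_mem_Icc.2 h.hB.le) hx hx.1
    rw [h.hF0] at this; exact this
  · have := h.Fmono hx (right_mem_Icc.2 h.hB.le) hx.2
    rw [h.hFB] at this; exact this



variable {B : ℝ} {F f : ℝ → ℝ}

/-- The distribution measure with density `f` on `(0,B]`. -/
noncomputable def nu (B : ℝ) (f : ℝ → ℝ) : Measure ℝ :=
  (volume.restrict (Ioc 0 B)).withDensity (fun x => ((f (cl B x)).toNNReal : ℝ≥0∞))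

lemma fcl_cont (h : Hyp B F f) : Continuous fun x => f (cl B x) :=
  h.hfcont.comp_continuous cl_cont (cl_mem h.hB.le)

lemma fcl_meas (h : Hyp B F f) : Measurable fun x => ((f (cl B x)).toNNReal : ℝ≥0∞) :=
  ((fcl_cont h).measurable.real_toNNReal).coe_nnreal_ennreal

lemma nu_apply (h : Hyp B F f) {s : Set ℝ} (hs : MeasurableSet s) :
    nu B f s = ∫⁻ x in s ∩ Ioc 0 B, ((f (cl B x)).toNNReal : ℝ≥0∞) := by
  rw [nu, withDensity_apply _ hs, Measure.restrict_restrict hs]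

lemma nu_Ioc (h : Hyp B F f) {a b : ℝ} (ha : 0 ≤ a) (hb : b ≤ B) (hab : a ≤ b) :
    nu B f (Ioc a b) = ENNReal.ofReal (F b - F a) := by
  rw [nu_apply h measurableSet_Ioc]
  have hinter : Ioc a b ∩ Ioc 0 B = Ioc a b := by
    apply inter_eq_left.2
    exact Ioc_subset_Ioc ha hb
  rw [hinter]
  have hfc : ContinuousOn (fun x => f (cl B x)) (Icc a b) := (fcl_cont h).continuousOn
  have hint : IntegrableOn (fun x => f (cl B x)) (Ioc a b) volume :=
    (hfc.integrableOn_compact isCompact_Icc).mono_set Ioc_subset_Icc_self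
  have e1 : ∫⁻ x in Ioc a b, ((f (cl B x)).toNNReal : ℝ≥0∞)
      = ∫⁻ x in Ioc a b, ENNReal.ofReal (f (cl B x)) := rfl
  rw [e1, ← ofReal_integral_eq_lintegral_ofReal hint (Filter.Eventually.of_forall fun x =>
      (h.hfpos _ (cl_mem h.hB.le x)).le)]
  congr 1
  have e2 : ∫ x in Ioc a b, f (cl B x) = ∫ x in Ioc a b, f x := by
    apply setIntegral_congr_fun measurableSet_Ioc
    intro x hx
    simp only []
    rw [cl_eq ⟨ha.trans hx.1.le, hx.2.trans hb⟩]
  rw [e2, ← intervalIntegral.integral_of_le hab, h.FTC ⟨ha, hab.trans hb⟩ ⟨ha.trans hab, hb⟩ hab]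


lemma nu_compl (h : Hyp B F f) : nu B f (Ioc 0 B)ᶜ = 0 := by
  rw [nu_apply h measurableSet_Ioc.compl, compl_inter_self]
  simp

lemma nu_ae (h : Hyp B F f) : ∀ᵐ x ∂(nu B f), x ∈ Ioc 0 B := by
  rw [Filter.eventually_iff, mem_ae_iff]
  exact nu_compl h

lemma nu_univ (h : Hyp B F f) : nu B f univ = 1 := by
  have : nu B f univ = nu B f (Ioc 0 B) := by
    rw [nu_apply h MeasurableSet.univ, nu_apply h measurableSet_Ioc, univ_inter, inter_self]
  rw [this, nu_Ioc h le_rfl le_rfl h.hB.le, h.hFB, h.hF0]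
  simp

lemma nu_isProb (h : Hyp B F f) : IsProbabilityMeasure (nu B f) := ⟨nu_univ h⟩

lemma nu_noAtoms (h : Hyp B F f) : NullSingletonClass (nu B f) := by
  constructor
  intro x
  rw [nu_apply h (measurableSet_singleton x)]
  refine le_antisymm ?_ bot_le |>.trans rfl
  calc ∫⁻ y in {x} ∩ Ioc 0 B, ((f (cl B y)).toNNReal : ℝ≥0∞)
      ≤ ∫⁻ y in {x}, ((f (cl B y)).toNNReal : ℝ≥0∞) :=
        lintegral_mono_set inter_subset_left
    _ = 0 := by
        rw [setLIntegral_measure_zero _ _ (measure_singleton x)]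

lemma nu_Iic (h : Hyp B F f) (a : ℝ) :
    nu B f (Iic a) = ENNReal.ofReal (F (cl B a)) := by
  rcases lt_or_ge a 0 with hlt | h0
  · have : Iic a ∩ Ioc 0 B = ∅ := by
      ext x; simp only [mem_inter_iff, mem_Iic, mem_Ioc, mem_empty_iff_false, iff_false]
      rintro ⟨h1, h2, _⟩; linarith
    have hcl : cl B a = 0 := by
      rw [cl, min_eq_left (hlt.le.trans h.hB.le), max_eq_left hlt.le]
    rw [nu_apply h measurableSet_Iic, this, hcl, h.hF0]
    simp
  rcases le_or_gt a B with hle | hgt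
  · have : Iic a ∩ Ioc 0 B = Ioc 0 a := by
      ext x; simp only [mem_inter_iff, mem_Iic, mem_Ioc]
      constructor
      · rintro ⟨h1, h2, _⟩; exact ⟨h2, h1⟩
      · rintro ⟨h1, h2⟩; exact ⟨h2, h1, h2.trans hle⟩
    have e := nu_Ioc h le_rfl hle h0
    rw [nu_apply h measurableSet_Iic, this]
    have e2 : (∫⁻ x in Ioc 0 a, ((f (cl B x)).toNNReal : ℝ≥0∞)) = nu B f (Ioc 0 a) := by
      rw [nu_apply h measurableSet_Ioc, inter_eq_left.2 (Ioc_subset_Ioc le_rfl hle)]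
    rw [e2, e, h.hF0, cl_eq ⟨h0, hle⟩, sub_zero]
  · have : Iic a ∩ Ioc 0 B = Ioc 0 B := inter_eq_right.2 fun x hx => hx.2.trans hgt.le
    have e := nu_Ioc h le_rfl le_rfl h.hB.le
    rw [nu_apply h measurableSet_Iic, this]
    have e2 : (∫⁻ x in Ioc 0 B, ((f (cl B x)).toNNReal : ℝ≥0∞)) = nu B f (Ioc 0 B) := by
      rw [nu_apply h measurableSet_Ioc, inter_self]
    rw [e2, e, h.hF0]
    have : cl B a = B := by simp [cl, min_eq_right hgt.le, max_eq_right h.hB.le]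
    rw [this, h.hFB, sub_zero]

/-- A bounded a.e.-strongly-measurable function is integrable on a finite measure. -/
lemma integrable_of_bdd {α : Type*} [MeasurableSpace α] {m : Measure α} [IsFiniteMeasure m]
    {g : α → ℝ} (hg : AEStronglyMeasurable g m) {C : ℝ} (hb : ∀ᵐ x ∂m, |g x| ≤ C) :
    Integrable g m :=
  (integrable_const C).mono' hg (by simpa [Real.norm_eq_abs] using hb)

/-- The fundamental Myerson identity:
`∫ (φ(z) − t) 1_{z > t} dν = 0` for every reserve `t ∈ [0,B]`. -/
lemma keyint (h : Hyp B F f) {t : ℝ} (ht : t ∈ Icc 0 B) :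
    ∫ z, (Ioi t).indicator (fun z => phi B F f z - t) z ∂(nu B f) = 0 := by
  rw [integral_indicator measurableSet_Ioi]
  have hres : (nu B f).restrict (Ioi t)
      = (volume.restrict (Ioc t B)).withDensity (fun x => ((f (cl B x)).toNNReal : ℝ≥0∞)) := by
    have hset : Ioi t ∩ Ioc 0 B = Ioc t B := by
      ext x
      simp only [mem_inter_iff, mem_Ioi, mem_Ioc]
      constructor
      · rintro ⟨h1, _, h3⟩; exact ⟨h1, h3⟩
      · rintro ⟨h1, h2⟩; exact ⟨h1, lt_of_le_of_lt ht.1 h1, h2⟩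
    rw [nu, restrict_withDensity measurableSet_Ioi,
      Measure.restrict_restrict measurableSet_Ioi, hset]
  rw [hres, integral_withDensity_eq_integral_smul ((fcl_cont h).measurable.real_toNNReal)]
  have hcongr : ∫ x in Ioc t B, (f (cl B x)).toNNReal • (phi B F f x - t)
      = ∫ x in Ioc t B, (F x - 1 + x * f x - t * f x) := by
    apply setIntegral_congr_fun measurableSet_Ioc
    intro x hx
    have hxI : x ∈ Icc 0 B := ⟨ht.1.trans hx.1.le, hx.2⟩
    have hfx := h.hfpos x hxI
    have e1 : ((f (cl B x)).toNNReal : ℝ) = f x := by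
      rw [cl_eq hxI]; exact Real.coe_toNNReal _ hfx.le
    have e2 : phi B F f x = x - (1 - F x) / f x := by
      rw [phi, cl_eq hxI]
    show (f (cl B x)).toNNReal • (phi B F f x - t) = F x - 1 + x * f x - t * f x
    rw [NNReal.smul_def, e1, smul_eq_mul, e2]
    field_simp
    ring
  rw [hcongr, ← intervalIntegral.integral_of_le ht.2]
  have hFTC : ∫ x in t..B, (F x - 1 + x * f x - t * f x)
      = (B * (F B - 1) - t * F B) - (t * (F t - 1) - t * F t) := by
    apply intervalIntegral.integral_eq_sub_of_hasDerivAt (f := fun x => x * (F x - 1) - t * F x)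
    · intro x hx
      have hxI : x ∈ Icc 0 B := by
        rw [uIcc_of_le ht.2] at hx
        exact ⟨ht.1.trans hx.1, hx.2⟩
      have hd := h.hderiv x hxI
      have h1 : HasDerivAt (fun x => x * (F x - 1)) (1 * (F x - 1) + x * f x) x :=
        (hasDerivAt_id x).mul (hd.sub_const 1)
      have h2 : HasDerivAt (fun x => t * F x) (t * f x) x := hd.const_mul t
      convert h1.sub h2 using 1
      · rfl
      · ring
    · have hsub : uIcc t B ⊆ Icc 0 B := by
        rw [uIcc_of_le ht.2]; exact Icc_subset_Icc ht.1 le_rfl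
      apply ContinuousOn.intervalIntegrable
      have hFc := h.Fcont.mono hsub
      have hfc := h.hfcont.mono hsub
      exact ((hFc.sub continuousOn_const).add (continuousOn_id.mul hfc)).sub
        (continuousOn_const.mul hfc)
  rw [hFTC, h.hFB]
  ring

lemma phi_mean (h : Hyp B F f) : ∫ z, phi B F f z ∂(nu B f) = 0 := by
  have hk := keyint h (left_mem_Icc.2 h.hB.le)
  rw [← hk]
  apply integral_congr_ae
  filter_upwards [nu_ae h] with z hz
  rw [indicator_of_mem (mem_Ioi.mpr hz.1), sub_zero]


section Pi


variable {n : ℕ} {B C : ℝ} {ν : Measure ℝ} [IsProbabilityMeasure ν] [NullSingletonClass ν] {φ : ℝ → ℝ}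

lemma ae_pi_mem {ι : Type*} [Fintype ι] {s : Set ℝ} (hs : ν sᶜ = 0) :
    ∀ᵐ y ∂(Measure.pi fun _ : ι => ν), ∀ i, y i ∈ s := by
  rw [ae_all_iff]
  intro i
  rw [Filter.eventually_iff, mem_ae_iff]
  have h2 : {y : ι → ℝ | y i ∈ s}ᶜ = Function.eval i ⁻¹' sᶜ := rfl
  rw [h2]
  exact Measure.pi_eval_preimage_null _ hs

lemma ae_pi_ne (i j : Fin (n + 1)) (hij : i ≠ j) :
    ∀ᵐ x ∂(Measure.pi fun _ : Fin (n + 1) => ν), x i ≠ x j := by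
  rw [Filter.eventually_iff, mem_ae_iff]
  have h2 : {x : Fin (n + 1) → ℝ | x i ≠ x j}ᶜ = {x | x i = x j} := by
    ext x; simp
  rw [h2]
  obtain ⟨k, hk⟩ := Fin.exists_succAbove_eq hij.symm
  set e := MeasurableEquiv.piFinSuccAbove (fun _ : Fin (n + 1) => ℝ) i with he
  have T := measurePreserving_piFinSuccAbove (fun _ : Fin (n + 1) => ν) i
  have hAmeas : MeasurableSet {p : ℝ × (Fin n → ℝ) | p.1 = p.2 k} :=
    measurableSet_eq_fun measurable_fst ((measurable_pi_apply k).comp measurable_snd)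
  have hpre : e ⁻¹' {p : ℝ × (Fin n → ℝ) | p.1 = p.2 k} = {x | x i = x j} := by
    ext x
    simp only [mem_preimage, mem_setOf_eq, he, MeasurableEquiv.piFinSuccAbove_apply,
      Fin.insertNthEquiv, Equiv.coe_fn_symm_mk, Fin.removeNth]
    rw [hk]
  rw [← hpre, T.measure_preimage hAmeas.nullMeasurableSet,
    Measure.prod_apply hAmeas]
  have hz : ∀ a : ℝ, (Measure.pi fun _ : Fin n => ν) (Prod.mk a ⁻¹' {p : ℝ × (Fin n → ℝ) | p.1 = p.2 k}) = 0 := by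
    intro a
    have h3 : Prod.mk a ⁻¹' {p : ℝ × (Fin n → ℝ) | p.1 = p.2 k} = {y : Fin n → ℝ | y k = a} := by
      ext y
      simp only [mem_preimage, mem_setOf_eq]
      exact eq_comm
    rw [h3]
    exact Measure.pi_hyperplane (fun _ : Fin n => ν) k a
  rw [lintegral_congr hz, lintegral_zero]

lemma integral_insertNth (i : Fin (n + 1)) (g : (Fin (n + 1) → ℝ) → ℝ) :
    ∫ x, g x ∂(Measure.pi fun _ : Fin (n + 1) => ν)
      = ∫ p : ℝ × (Fin n → ℝ), g (i.insertNth p.1 p.2)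
          ∂(ν.prod (Measure.pi fun _ : Fin n => ν)) := by
  have T := (measurePreserving_piFinSuccAbove (fun _ : Fin (n + 1) => ν) i).symm
  rw [← T.integral_comp (MeasurableEquiv.measurableEmbedding _) g]
  congr 1

lemma erase_sup'_eq (i : Fin (n + 1)) (x : Fin (n + 1) → ℝ)
    (hh1 : ((Finset.univ : Finset (Fin (n + 1))).erase i).Nonempty)
    (hh2 : (Finset.univ : Finset (Fin n)).Nonempty) :
    ((Finset.univ : Finset (Fin (n + 1))).erase i).sup' hh1 (fun j => x j)
      = (Finset.univ : Finset (Fin n)).sup' hh2 (fun j => x (i.succAbove j)) := by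
  have he : ((Finset.univ : Finset (Fin (n + 1))).erase i)
      = Finset.univ.map (Fin.succAboveEmb i) := by
    rw [Fin.univ_succAbove n i, Finset.erase_cons]
  rw [Finset.sup'_congr hh1 he (fun _ _ => rfl), Finset.sup'_map]
  rfl


theorem pi_main (hn : 1 ≤ n) (hB : 0 < B)
    (hae : ν (Ioc 0 B)ᶜ = 0)
    (hφm : Monotone φ) (hφc : Continuous φ)
    (hC : 0 ≤ C) (hbd : ∀ x, |φ x| ≤ C)
    (hkey : ∀ t ∈ Icc 0 B, ∫ z, (Ioi t).indicator (fun z => φ z - t) z ∂ν = 0)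
    (hmean : ∫ z, φ z ∂ν = 0)
    (h1 : (Finset.univ : Finset (Fin n)).Nonempty)
    (h2 : (Finset.univ : Finset (Fin (n + 1))).Nonempty)
    (h3 : ∀ i : Fin (n + 1), ((Finset.univ : Finset (Fin (n + 1))).erase i).Nonempty) :
    ∫ x, max 0 (Finset.univ.sup' h1 (fun i : Fin n => φ (x i.castSucc)))
        ∂(Measure.pi fun _ : Fin (n + 1) => ν)
      ≤ ∫ x, Finset.univ.sup' h2
          (fun i => (Finset.univ.erase i).sup' (h3 i) (fun j => x j))
        ∂(Measure.pi fun _ : Fin (n + 1) => ν) := by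
  set P := (Measure.pi fun _ : Fin (n + 1) => ν) with hP
  set Q := (Measure.pi fun _ : Fin n => ν) with hQ
  -- basic objects
  set M : Fin (n + 1) → (Fin (n + 1) → ℝ) → ℝ :=
    fun i x => Finset.univ.sup' h1 (fun j : Fin n => x (i.succAbove j)) with hM
  set gL : (Fin (n + 1) → ℝ) → ℝ :=
    fun x => max 0 (Finset.univ.sup' h1 (fun i : Fin n => φ (x i.castSucc))) with hgL
  set gM : (Fin (n + 1) → ℝ) → ℝ :=
    fun x => Finset.univ.sup' h2 (fun i => φ (x i)) with hgM
  set gR : (Fin (n + 1) → ℝ) → ℝ :=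
    fun x => Finset.univ.sup' h2 (fun i => M i x) with hgR
  -- measurability facts
  have msup : ∀ {ι : Type} [Fintype ι] (hne : (Finset.univ : Finset ι).Nonempty)
      (u : ι → (Fin (n + 1) → ℝ) → ℝ), (∀ j, Measurable (u j)) →
      Measurable (fun x => Finset.univ.sup' hne (fun j => u j x)) := by
    intro ι _ hne u hu
    have := Finset.measurable_sup' hne (fun j _ => hu j)
    convert this using 1
    funext x
    rw [Finset.sup'_apply]
  have mM : ∀ i, Measurable (M i) := fun i =>
    msup h1 _ (fun j => measurable_pi_apply _)
  have mgL : Measurable gL :=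
    measurable_const.max (msup h1 _
      (fun j => hφc.measurable.comp (measurable_pi_apply _)))
  have mgM : Measurable gM :=
    msup h2 _ (fun i => hφc.measurable.comp (measurable_pi_apply _))
  have mgR : Measurable gR :=
    msup h2 _ (fun i => mM i)
  -- a.e. facts on P
  have hcoords : ∀ᵐ x ∂P, ∀ i, x i ∈ Ioc 0 B := ae_pi_mem hae
  have hdist : ∀ᵐ x ∂P, ∀ i j : Fin (n + 1), i ≠ j → x i ≠ x j := by
    rw [ae_all_iff]
    intro i
    rw [ae_all_iff]
    intro j
    by_cases hij : i = j
    · exact Filter.Eventually.of_forall (fun x h => absurd hij h)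
    · filter_upwards [ae_pi_ne i j hij] with x hx _
      exact hx
  -- bound facts
  have hMbd : ∀ᵐ x ∂P, ∀ i, M i x ∈ Icc 0 B := by
    filter_upwards [hcoords] with x hx i
    constructor
    · exact le_trans (hx (i.succAbove h1.choose)).1.le
        (Finset.le_sup' (fun j : Fin n => x (i.succAbove j)) (Finset.mem_univ h1.choose))
    · exact Finset.sup'_le _ _ (fun j _ => (hx _).2)
  have hBnn : (0:ℝ) ≤ B := hB.le
  -- |sup'| bound helper
  have habs_sup : ∀ {ι : Type} [Fintype ι] (hne : (Finset.univ : Finset ι).Nonempty)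
      (u : ι → ℝ) (D : ℝ), (∀ j, |u j| ≤ D) → |Finset.univ.sup' hne u| ≤ D := by
    intro ι _ hne u D h
    rw [abs_le]
    constructor
    · exact le_trans (abs_le.1 (h hne.choose)).1 (Finset.le_sup' u (Finset.mem_univ hne.choose))
    · exact Finset.sup'_le _ _ (fun j _ => (abs_le.1 (h j)).2)
  -- integrability
  have igL : Integrable gL P := by
    apply integrable_of_bdd mgL.aestronglyMeasurable (C := C)
    apply Filter.Eventually.of_forall
    intro x
    rw [abs_le]
    constructor
    · linarith [le_max_left (0:ℝ) (Finset.univ.sup' h1 (fun i : Fin n => φ (x i.castSucc)))]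
    · exact max_le hC (Finset.sup'_le _ _ (fun j _ => (abs_le.1 (hbd _)).2))
  have igM : Integrable gM P := by
    apply integrable_of_bdd mgM.aestronglyMeasurable (C := C)
    exact Filter.Eventually.of_forall fun x => habs_sup h2 _ C (fun i => hbd _)
  have igR : Integrable gR P := by
    apply integrable_of_bdd mgR.aestronglyMeasurable (C := B)
    filter_upwards [hMbd] with x hx
    exact habs_sup h2 _ B (fun i => abs_le.2 ⟨by linarith [(hx i).1], (hx i).2⟩)
  -- the F and K families
  set Fa : Fin (n + 1) → (Fin (n + 1) → ℝ) → ℝ :=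
    fun i x => if M i x < x i then φ (x i) else 0 with hFa
  set Ka : Fin (n + 1) → (Fin (n + 1) → ℝ) → ℝ :=
    fun i x => if M i x < x i then M i x else 0 with hKa
  have msetL : ∀ i, MeasurableSet {x : Fin (n + 1) → ℝ | M i x < x i} :=
    fun i => measurableSet_lt (mM i) (measurable_pi_apply i)
  have mFa : ∀ i, Measurable (Fa i) := fun i =>
    Measurable.ite (msetL i) (hφc.measurable.comp (measurable_pi_apply i)) measurable_const
  have mKa : ∀ i, Measurable (Ka i) := fun i =>
    Measurable.ite (msetL i) (mM i) measurable_const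
  have iFa : ∀ i, Integrable (Fa i) P := by
    intro i
    apply integrable_of_bdd (mFa i).aestronglyMeasurable (C := C)
    apply Filter.Eventually.of_forall
    intro x
    rw [hFa]
    dsimp only
    split
    · exact hbd _
    · simpa using hC
  have iKa : ∀ i, Integrable (Ka i) P := by
    intro i
    apply integrable_of_bdd (mKa i).aestronglyMeasurable (C := B)
    filter_upwards [hMbd] with x hx
    rw [hKa]
    dsimp only
    split
    · exact abs_le.2 ⟨by linarith [(hx i).1], (hx i).2⟩
    · simpa using hBnn
  have iSumF : Integrable (fun x => ∑ i, Fa i x) P :=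
    integrable_finset_sum _ (fun i _ => iFa i)
  have iSumK : Integrable (fun x => ∑ i, Ka i x) P :=
    integrable_finset_sum _ (fun i _ => iKa i)
  -- ae facts on Q and the product
  have hQae : ∀ᵐ y ∂Q, ∀ j, y j ∈ Ioc 0 B := ae_pi_mem hae
  have hprod_ae : ∀ᵐ p : ℝ × (Fin n → ℝ) ∂(ν.prod Q), ∀ j, p.2 j ∈ Ioc 0 B := by
    rw [Filter.eventually_iff, mem_ae_iff] at hQae ⊢
    exact Measure.quasiMeasurePreserving_snd.preimage_null hQae
  have hm_mem : ∀ y : Fin n → ℝ, (∀ j, y j ∈ Ioc 0 B) →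
      Finset.univ.sup' h1 y ∈ Icc 0 B := by
    intro y hy
    constructor
    · exact le_trans (hy h1.choose).1.le (Finset.le_sup' y (Finset.mem_univ h1.choose))
    · exact Finset.sup'_le _ _ (fun j _ => (hy j).2)
  have iφ : Integrable φ ν :=
    integrable_of_bdd hφc.measurable.aestronglyMeasurable
      (Filter.Eventually.of_forall hbd)
  -- the per-bidder payment identity
  have key_i : ∀ i : Fin (n + 1),
      ∫ x, (if M i x < x i then φ (x i) - M i x else 0) ∂P = 0 := by
    intro i
    rw [hP, integral_insertNth i]
    have hMins : ∀ (a : ℝ) (y : Fin n → ℝ), M i (i.insertNth a y) = Finset.univ.sup' h1 y := by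
      intro a y
      rw [hM]
      dsimp only
      apply Finset.sup'_congr h1 rfl
      intro j _
      rw [Fin.insertNth_apply_succAbove]
    have hIins : ∀ (a : ℝ) (y : Fin n → ℝ),
        (Fin.insertNth (α := fun _ => ℝ) i a y) i = a := by
      intro a y
      simp
    have hre : (fun p : ℝ × (Fin n → ℝ) =>
          if M i (Fin.insertNth (α := fun _ => ℝ) i p.1 p.2)
              < (Fin.insertNth (α := fun _ => ℝ) i p.1 p.2) i
            then φ ((Fin.insertNth (α := fun _ => ℝ) i p.1 p.2) i)
              - M i (Fin.insertNth (α := fun _ => ℝ) i p.1 p.2) else 0)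
        = fun p : ℝ × (Fin n → ℝ) =>
          if Finset.univ.sup' h1 p.2 < p.1 then φ p.1 - Finset.univ.sup' h1 p.2 else 0 := by
      funext p
      rw [hMins, hIins]
    rw [hre]
    -- integrability on the product
    have mμm : Measurable fun y : Fin n → ℝ => Finset.univ.sup' h1 y := by
      have := Finset.measurable_sup' h1
        (f := fun (j : Fin n) (y : Fin n → ℝ) => y j) (fun j _ => measurable_pi_apply j)
      convert this using 1
      funext y
      rw [Finset.sup'_apply]
    have hsetp : MeasurableSet {p : ℝ × (Fin n → ℝ) | Finset.univ.sup' h1 p.2 < p.1} :=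
      measurableSet_lt (mμm.comp measurable_snd) measurable_fst
    have mG : Measurable fun p : ℝ × (Fin n → ℝ) =>
        if Finset.univ.sup' h1 p.2 < p.1 then φ p.1 - Finset.univ.sup' h1 p.2 else 0 :=
      Measurable.ite hsetp
        ((hφc.measurable.comp measurable_fst).sub (mμm.comp measurable_snd))
        measurable_const
    have iG : Integrable (fun p : ℝ × (Fin n → ℝ) =>
        if Finset.univ.sup' h1 p.2 < p.1 then φ p.1 - Finset.univ.sup' h1 p.2 else 0)
        (ν.prod Q) := by
      apply integrable_of_bdd mG.aestronglyMeasurable (C := C + B)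
      filter_upwards [hprod_ae] with p hp
      have hmem := hm_mem p.2 hp
      split
      · have h4 := hbd p.1
        have h5 : |Finset.univ.sup' h1 p.2| ≤ B :=
          abs_le.2 ⟨by linarith [hmem.1], hmem.2⟩
        calc |φ p.1 - Finset.univ.sup' h1 p.2| ≤ |φ p.1| + |Finset.univ.sup' h1 p.2| :=
              abs_sub _ _
          _ ≤ C + B := add_le_add h4 h5
      · simp only [abs_zero]
        linarith
    rw [integral_prod_symm _ iG]
    have hinner : (fun y : Fin n → ℝ =>
          ∫ a, (if Finset.univ.sup' h1 y < a then φ a - Finset.univ.sup' h1 y else 0) ∂ν)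
        =ᵐ[Q] fun _ => (0:ℝ) := by
      filter_upwards [hQae] with y hy
      have hmem := hm_mem y hy
      have he : (fun a => if Finset.univ.sup' h1 y < a then φ a - Finset.univ.sup' h1 y else 0)
          = fun a => (Ioi (Finset.univ.sup' h1 y)).indicator
              (fun z => φ z - Finset.univ.sup' h1 y) a := by
        funext a
        rw [indicator]
        simp only [mem_Ioi]
      rw [he]
      exact hkey _ hmem
    rw [integral_congr_ae hinner]
    simp
  -- claim a : gM ≤ ∑ F a.e.
  have ha : ∀ᵐ x ∂P, gM x ≤ ∑ i, Fa i x := by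
    filter_upwards [hdist] with x hx
    obtain ⟨i0, -, hsup⟩ := Finset.exists_mem_eq_sup' h2 (fun i : Fin (n + 1) => x i)
    have hle : ∀ j, x j ≤ x i0 := fun j => hsup ▸ Finset.le_sup' _ (Finset.mem_univ j)
    have hlt : ∀ j, j ≠ i0 → x j < x i0 := fun j hj =>
      lt_of_le_of_ne (hle j) (hx j i0 hj)
    have hM0 : M i0 x < x i0 := by
      rw [hM]
      dsimp only
      rw [Finset.sup'_lt_iff]
      intro j _
      exact hlt _ (Fin.succAbove_ne i0 j)
    have hsum : ∑ i, Fa i x = φ (x i0) := by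
      rw [Finset.sum_eq_single_of_mem i0 (Finset.mem_univ _)]
      · rw [hFa]
        dsimp only
        rw [if_pos hM0]
      · intro j _ hj
        rw [hFa]
        dsimp only
        rw [if_neg]
        rw [not_lt]
        obtain ⟨k, hk⟩ := Fin.exists_succAbove_eq (Ne.symm hj)
        have h6 : x i0 ≤ M j x := by
          rw [hM]
          dsimp only
          exact hk ▸ Finset.le_sup' (fun l : Fin n => x (j.succAbove l)) (Finset.mem_univ k)
        linarith [hlt j hj]
    rw [hsum, hgM]
    dsimp only
    exact Finset.sup'_le _ _ (fun i _ => hφm (hle i))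
  -- claim c : ∑ K ≤ gR a.e.
  have hc : ∀ᵐ x ∂P, ∑ i, Ka i x ≤ gR x := by
    filter_upwards [hcoords] with x hx
    by_cases hex : ∃ i0, M i0 x < x i0
    · obtain ⟨i0, hi0⟩ := hex
      have hsum : ∑ i, Ka i x = M i0 x := by
        rw [Finset.sum_eq_single_of_mem i0 (Finset.mem_univ _)]
        · rw [hKa]
          dsimp only
          rw [if_pos hi0]
        · intro j _ hj
          obtain ⟨k, hk⟩ := Fin.exists_succAbove_eq hj
          have h6 : x j ≤ M i0 x := by
            rw [hM]
            dsimp only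
            exact hk ▸ Finset.le_sup' (fun l : Fin n => x (i0.succAbove l)) (Finset.mem_univ k)
          obtain ⟨k2, hk2⟩ := Fin.exists_succAbove_eq (Ne.symm hj)
          have h7 : x i0 ≤ M j x := by
            rw [hM]
            dsimp only
            exact hk2 ▸ Finset.le_sup' (fun l : Fin n => x (j.succAbove l)) (Finset.mem_univ k2)
          rw [hKa]
          dsimp only
          rw [if_neg (not_lt.2 (by linarith))]
      rw [hsum, hgR]
      dsimp only
      exact Finset.le_sup' (fun i => M i x) (Finset.mem_univ i0)
    · push_neg at hex
      have hsum : ∑ i, Ka i x = 0 := by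
        apply Finset.sum_eq_zero
        intro i _
        rw [hKa]
        dsimp only
        rw [if_neg (not_lt.2 (hex i))]
      rw [hsum, hgR]
      dsimp only
      have h8 : (0:ℝ) ≤ M h2.choose x := by
        rw [hM]
        dsimp only
        exact le_trans (hx (h2.choose.succAbove h1.choose)).1.le
          (Finset.le_sup' (fun l : Fin n => x (h2.choose.succAbove l)) (Finset.mem_univ h1.choose))
      exact le_trans h8 (Finset.le_sup' (fun i => M i x) (Finset.mem_univ h2.choose))
  -- assemble step (ii)
  have hFK : ∀ i, ∫ x, Fa i x ∂P = ∫ x, Ka i x ∂P := by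
    intro i
    have hdiffe : (fun x => Fa i x - Ka i x)
        = fun x => (if M i x < x i then φ (x i) - M i x else 0) := by
      funext x
      rw [hFa, hKa]
      dsimp only
      split
      · rfl
      · simp
    have := key_i i
    rw [← hdiffe] at this
    rw [integral_sub (iFa i) (iKa i)] at this
    linarith
  have hstep2 : ∫ x, gM x ∂P ≤ ∫ x, gR x ∂P := by
    calc ∫ x, gM x ∂P ≤ ∫ x, ∑ i, Fa i x ∂P := integral_mono_ae igM iSumF ha
      _ = ∑ i, ∫ x, Fa i x ∂P := integral_finset_sum _ (fun i _ => iFa i)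
      _ = ∑ i, ∫ x, Ka i x ∂P := by
          exact Finset.sum_congr rfl (fun i _ => hFK i)
      _ = ∫ x, ∑ i, Ka i x ∂P := (integral_finset_sum _ (fun i _ => iKa i)).symm
      _ ≤ ∫ x, gR x ∂P := integral_mono_ae iSumK igR hc
  -- step (i): adding the extra bidder
  have hsplit : ∀ x : Fin (n + 1) → ℝ,
      gM x = max (φ (x (Fin.last n)))
        (Finset.univ.sup' h1 (fun j : Fin n => φ (x ((Fin.last n).succAbove j)))) := by
    intro x
    rw [hgM]
    dsimp only
    rw [Finset.sup'_congr h2 (Fin.univ_succAbove n (Fin.last n)) (fun _ _ => rfl),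
      Finset.sup'_cons (h1.map (f := Fin.succAboveEmb (Fin.last n))), Finset.sup'_map]
    rfl
  have hstep1 : ∫ x, gL x ∂P ≤ ∫ x, gM x ∂P := by
    rw [hP, integral_insertNth (Fin.last n) gL, integral_insertNth (Fin.last n) gM]
    set A : (Fin n → ℝ) → ℝ := fun y => Finset.univ.sup' h1 (fun j => φ (y j)) with hA
    have mA : Measurable A := by
      have := Finset.measurable_sup' h1 (f := fun (j : Fin n) (y : Fin n → ℝ) => φ (y j))
        (fun j _ => hφc.measurable.comp (measurable_pi_apply j))
      convert this using 1
      funext y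
      rw [Finset.sup'_apply]
    have hAbd : ∀ y, |A y| ≤ C := fun y => habs_sup h1 _ C (fun j => hbd _)
    have hgLi : (fun p : ℝ × (Fin n → ℝ) =>
          gL (Fin.insertNth (α := fun _ => ℝ) (Fin.last n) p.1 p.2))
        = fun p => max 0 (A p.2) := by
      funext p
      rw [hgL]
      dsimp only
      congr 1
      rw [hA]
      apply Finset.sup'_congr h1 rfl
      intro j _
      rw [← Fin.succAbove_last, Fin.insertNth_apply_succAbove]
    have hgMi : (fun p : ℝ × (Fin n → ℝ) =>
          gM (Fin.insertNth (α := fun _ => ℝ) (Fin.last n) p.1 p.2))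
        = fun p => max (φ p.1) (A p.2) := by
      funext p
      rw [hsplit]
      congr 1
      · congr 1
        simp
      · rw [hA]
        apply Finset.sup'_congr h1 rfl
        intro j _
        rw [Fin.insertNth_apply_succAbove]
    rw [hgLi, hgMi]
    have mL : Measurable (fun p : ℝ × (Fin n → ℝ) => max 0 (A p.2)) :=
      measurable_const.max (mA.comp measurable_snd)
    have iL : Integrable (fun p : ℝ × (Fin n → ℝ) => max 0 (A p.2)) (ν.prod Q) := by
      apply integrable_of_bdd mL.aestronglyMeasurable (C := C)
      apply Filter.Eventually.of_forall
      intro p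
      rw [abs_le]
      constructor
      · linarith [le_max_left (0:ℝ) (A p.2)]
      · exact max_le hC (abs_le.1 (hAbd p.2)).2
    have mM2 : Measurable (fun p : ℝ × (Fin n → ℝ) => max (φ p.1) (A p.2)) :=
      (hφc.measurable.comp measurable_fst).max (mA.comp measurable_snd)
    have iM2 : Integrable (fun p : ℝ × (Fin n → ℝ) => max (φ p.1) (A p.2)) (ν.prod Q) := by
      apply integrable_of_bdd mM2.aestronglyMeasurable (C := C)
      apply Filter.Eventually.of_forall
      intro p
      rw [abs_le]
      constructor
      · linarith [le_max_left (φ p.1) (A p.2), (abs_le.1 (hbd p.1)).1]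
      · exact max_le (abs_le.1 (hbd p.1)).2 (abs_le.1 (hAbd p.2)).2
    rw [integral_prod_symm _ iL, integral_prod_symm _ iM2]
    apply integral_mono_ae (iL.integral_prod_right) (iM2.integral_prod_right)
    apply Filter.Eventually.of_forall
    intro y
    dsimp only
    have e1 : ∫ _ : ℝ, max 0 (A y) ∂ν = max 0 (A y) := by
      rw [integral_const]
      simp
    rw [e1]
    have imax : Integrable (fun a => max (φ a) (A y)) ν := by
      apply integrable_of_bdd ((hφc.measurable.max measurable_const).aestronglyMeasurable)
        (C := C + |A y|)
      apply Filter.Eventually.of_forall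
      intro a
      rw [abs_le]
      constructor
      · have h10 := (abs_le.1 (hbd a)).1
        have h9 := abs_nonneg (A y)
        linarith [le_max_left (φ a) (A y)]
      · exact max_le (by linarith [(abs_le.1 (hbd a)).2, abs_nonneg (A y)])
          (by linarith [le_abs_self (A y), (abs_le.1 (hbd a)).2])
    apply max_le
    · rw [← hmean]
      exact integral_mono iφ imax (fun a => le_max_left _ _)
    · have e2 : A y = ∫ _ : ℝ, A y ∂ν := by
        rw [integral_const]
        simp
      conv_lhs => rw [e2]
      exact integral_mono (integrable_const _) imax (fun a => le_max_right _ _)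
  -- conclusion
  have hfinal : (fun x : Fin (n + 1) → ℝ => Finset.univ.sup' h2
      (fun i => (Finset.univ.erase i).sup' (h3 i) (fun j => x j))) = gR := by
    funext x
    rw [hgR]
    dsimp only
    apply Finset.sup'_congr h2 rfl
    intro i _
    rw [erase_sup'_eq i x (h3 i) h1]
  rw [hfinal]
  exact le_trans hstep1 hstep2

end Pi

lemma measurable_sup'_comp {δ : Type*} [MeasurableSpace δ] {ι : Type*} {s : Finset ι}
    (hne : s.Nonempty) (u : ι → δ → ℝ) (hu : ∀ j, Measurable (u j)) :
    Measurable fun x => s.sup' hne (fun j => u j x) := by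
  have := Finset.measurable_sup' hne (fun j (_ : j ∈ s) => hu j)
  convert this using 1
  funext x
  rw [Finset.sup'_apply]

lemma map_eq_nu (h : Hyp B F f) {Ω : Type*} [MeasurableSpace Ω] (μ : Measure Ω)
    [IsProbabilityMeasure μ] (Y : Ω → ℝ) (hY : Measurable Y)
    (hYsupp : ∀ ω, Y ω ∈ Icc 0 B)
    (hYcdf : ∀ x ∈ Icc 0 B, (μ {ω | Y ω ≤ x}).toReal = F x) :
    μ.map Y = nu B f := by
  haveI : IsProbabilityMeasure (μ.map Y) := Measure.isProbabilityMeasure_map hY.aemeasurable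
  apply Measure.ext_of_Iic
  intro a
  rw [Measure.map_apply hY measurableSet_Iic, nu_Iic h a]
  have hpre : Y ⁻¹' Iic a = {ω | Y ω ≤ a} := rfl
  rw [hpre]
  rcases lt_or_ge a 0 with hlt | h0
  · have he : {ω | Y ω ≤ a} = ∅ := by
      ext ω
      simp only [mem_setOf_eq, mem_empty_iff_false, iff_false, not_le]
      exact lt_of_lt_of_le hlt (hYsupp ω).1
    have hcl : cl B a = 0 := by
      rw [cl, min_eq_left (hlt.le.trans h.hB.le), max_eq_left hlt.le]
    rw [he, hcl, h.hF0, measure_empty]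
    simp
  rcases le_or_gt a B with hle | hgt
  · have hc := hYcdf a ⟨h0, hle⟩
    rw [cl_eq ⟨h0, hle⟩, ← hc, ENNReal.ofReal_toReal (measure_ne_top μ _)]
  · have he : {ω | Y ω ≤ a} = univ := by
      ext ω
      simp only [mem_setOf_eq, mem_univ, iff_true]
      exact (hYsupp ω).2.trans hgt.le
    have hcl : cl B a = B := by
      rw [cl, min_eq_right hgt.le, max_eq_right h.hB.le]
    rw [he, hcl, h.hFB, measure_univ]
    simp

lemma map_pi_eq (h : Hyp B F f) {Ω : Type*} [MeasurableSpace Ω] (μ : Measure Ω)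
    [IsProbabilityMeasure μ] {m : ℕ} (X : Fin m → Ω → ℝ) (hX : ∀ i, Measurable (X i))
    (hindep : iIndepFun X μ)
    (hmap : ∀ i, μ.map (X i) = nu B f) :
    μ.map (fun ω (i : Fin m) => X i ω) = Measure.pi (fun _ : Fin m => nu B f) := by
  haveI := nu_isProb h
  symm
  apply Measure.pi_eq
  intro s hs
  rw [Measure.map_apply (measurable_pi_lambda _ hX) (MeasurableSet.univ_pi hs)]
  have hpre : (fun ω (i : Fin m) => X i ω) ⁻¹' (univ.pi s)
      = ⋂ i ∈ Finset.univ, X i ⁻¹' s i := by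
    ext ω
    simp [Set.mem_pi]
  rw [hpre, hindep.measure_inter_preimage_eq_mul Finset.univ (fun i _ => hs i)]
  apply Finset.prod_congr rfl
  intro i _
  rw [← hmap i, Measure.map_apply (hX i) (hs i)]

end BKaux

open BKaux in
/-- **Bulow–Klemperer (auctions versus negotiations).**
Let `F` be a regular valuation distribution on `[0,B]` with density `f` and virtual
value `φ x = x − (1 − F x)/f x`, let `n ≥ 1`, and let `X 0, …, X n` be `n+1` i.i.d.
draws from `F`.  Then the expected revenue of the Vickrey auction with `n+1` bidders
and no reserve — the expected second-highest value, where the second-highest of the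
values is the maximum over `i` of the maximum of the values excluding index `i` — is
at least `E[max(0, max_{i < n} φ(X i))]`, the optimal expected revenue achievable with
only `n` bidders. -/
theorem bulow_klemperer
    (n : ℕ) (hn : 1 ≤ n)
    (B : ℝ) (hB : 0 < B) (F f : ℝ → ℝ)
    (hderiv : ∀ x ∈ Set.Icc 0 B, HasDerivAt F (f x) x)
    (hfcont : ContinuousOn f (Set.Icc 0 B))
    (hfpos : ∀ x ∈ Set.Icc 0 B, 0 < f x)
    (hF0 : F 0 = 0) (hFB : F B = 1)
    (hreg : MonotoneOn (fun x => x - (1 - F x) / f x) (Set.Icc 0 B))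
    {Ω : Type*} [MeasurableSpace Ω] (μ : Measure Ω) [IsProbabilityMeasure μ]
    (X : Fin (n + 1) → Ω → ℝ) (hX : ∀ i, Measurable (X i))
    (hindep : iIndepFun X μ)
    (hsupp : ∀ i ω, X i ω ∈ Set.Icc 0 B)
    (hcdf : ∀ i, ∀ x ∈ Set.Icc 0 B, (μ {ω | X i ω ≤ x}).toReal = F x) :
    ∫ ω, max 0 (Finset.univ.sup' ⟨⟨0, hn⟩, Finset.mem_univ _⟩
        (fun i : Fin n => X i.castSucc ω - (1 - F (X i.castSucc ω)) / f (X i.castSucc ω))) ∂μ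
      ≤ ∫ ω, Finset.univ.sup' ⟨0, Finset.mem_univ _⟩
          (fun i : Fin (n + 1) =>
            (Finset.univ.erase i).sup'
              (by
                have h : 1 ≤ (Finset.univ.erase i).card := by
                  rw [Finset.card_erase_of_mem (Finset.mem_univ i), Finset.card_univ,
                    Fintype.card_fin]
                  omega
                exact Finset.card_pos.mp h)
              (fun j => X j ω)) ∂μ := by
  have h : Hyp B F f := ⟨hB, hderiv, hfcont, hfpos, hF0, hFB, hreg⟩
  haveI := nu_isProb h
  haveI := nu_noAtoms h
  obtain ⟨C, hC, hbd⟩ := h.phi_bound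
  have h1 : (Finset.univ : Finset (Fin n)).Nonempty := ⟨⟨0, hn⟩, Finset.mem_univ _⟩
  have h2 : (Finset.univ : Finset (Fin (n + 1))).Nonempty := ⟨0, Finset.mem_univ _⟩
  have h3 : ∀ i : Fin (n + 1), ((Finset.univ : Finset (Fin (n + 1))).erase i).Nonempty := by
    intro i
    have hcard : 1 ≤ ((Finset.univ : Finset (Fin (n + 1))).erase i).card := by
      rw [Finset.card_erase_of_mem (Finset.mem_univ i), Finset.card_univ, Fintype.card_fin]
      omega
    exact Finset.card_pos.mp hcard
  have main := pi_main (ν := nu B f) (φ := phi B F f) hn hB (nu_compl h)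
    h.phi_mono h.phi_cont hC hbd (fun t ht => keyint h ht) (phi_mean h) h1 h2 h3
  have hXv : Measurable fun ω (i : Fin (n + 1)) => X i ω := measurable_pi_lambda _ hX
  have hmap : μ.map (fun ω (i : Fin (n + 1)) => X i ω)
      = Measure.pi (fun _ : Fin (n + 1) => nu B f) :=
    map_pi_eq h μ X hX hindep
      (fun i => map_eq_nu h μ (X i) (hX i) (hsupp i) (hcdf i))
  have mgL : Measurable fun x : Fin (n + 1) → ℝ =>
      max 0 (Finset.univ.sup' h1 (fun i : Fin n => phi B F f (x i.castSucc))) :=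
    measurable_const.max (measurable_sup'_comp h1 _
      (fun j => h.phi_cont.measurable.comp (measurable_pi_apply _)))
  have mgR : Measurable fun x : Fin (n + 1) → ℝ => Finset.univ.sup' h2
      (fun i => (Finset.univ.erase i).sup' (h3 i) (fun j => x j)) :=
    measurable_sup'_comp h2 _
      (fun i => measurable_sup'_comp (h3 i) _ (fun j => measurable_pi_apply _))
  have eL : ∫ ω, max 0 (Finset.univ.sup' h1
        (fun i : Fin n => X i.castSucc ω - (1 - F (X i.castSucc ω)) / f (X i.castSucc ω))) ∂μ
      = ∫ x, max 0 (Finset.univ.sup' h1 (fun i : Fin n => phi B F f (x i.castSucc)))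
          ∂(Measure.pi (fun _ : Fin (n + 1) => nu B f)) := by
    rw [← hmap, integral_map hXv.aemeasurable mgL.aestronglyMeasurable]
    apply integral_congr_ae
    apply Filter.Eventually.of_forall
    intro ω
    dsimp only
    congr 1
    apply Finset.sup'_congr h1 rfl
    intro i _
    rw [phi_eq (hsupp _ ω)]
  have eR : ∫ x, (Finset.univ.sup' h2
        (fun i => (Finset.univ.erase i).sup' (h3 i) (fun j => x j)))
          ∂(Measure.pi (fun _ : Fin (n + 1) => nu B f))
      = ∫ ω, Finset.univ.sup' h2
          (fun i => (Finset.univ.erase i).sup' (h3 i) (fun j => X j ω)) ∂μ := by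
    rw [← hmap, integral_map hXv.aemeasurable mgR.aestronglyMeasurable]
  exact le_trans (le_of_eq eL) (le_trans main (le_of_eq eR))
end
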